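/- arXiv:1703.09140 — 5 statements merged into one kernel-verified Lean document; each statement's English description precedes it below -/
import Mathlib

section
/- Let Ω ⊂ ℝ^d be a nonempty bounded open set with boundary F = ∂Ω, and let V_F(r) := |F_r ∩ Ω|_d for r > 0 be its volume function. Let ρ ∈ ℝ. Then there exists a function h regularly varying at 0 of index ρ such that F is h-Minkowski measurable if and only if V_F is regularly varying at 0 of index ρ. -/
open Filter MeasureTheory Metric Set Topology
open scoped ENNReal

noncomputable section

/-- A (measurable, positive-on-`(0,∞)`) function `h` is regularly varying at `0` of index `ρ`:
it is measurable on `(0,∞)` and for every `t > 0`, `h (t*y) / h y → t^ρ` as `y → 0⁺`. -/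
def RegVaryAtZero (h : ℝ → ℝ) (ρ : ℝ) : Prop :=
  Measurable (fun y : Set.Ioi (0:ℝ) => h y) ∧
    ∀ t : ℝ, 0 < t →
      Tendsto (fun y => h (t * y) / h y) (𝓝[>] (0:ℝ)) (𝓝 (t ^ ρ))

theorem statement1 {d : ℕ} (Ω : Set (EuclideanSpace ℝ (Fin d)))
    (hne : Ω.Nonempty) (hΩb : Bornology.IsBounded Ω) (hΩo : IsOpen Ω) (ρ : ℝ) :
    (∃ h : ℝ → ℝ, (∀ y > 0, 0 < h y) ∧ RegVaryAtZero h ρ ∧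
      ∃ M : ℝ, 0 < M ∧
        Tendsto (fun r => (volume (cthickening r (frontier Ω) ∩ Ω)).toReal / h r)
          (𝓝[>] (0:ℝ)) (𝓝 M)) ↔
    RegVaryAtZero (fun r => (volume (cthickening r (frontier Ω) ∩ Ω)).toReal) ρ := by
  set V : ℝ → ℝ := fun r => (volume (cthickening r (frontier Ω) ∩ Ω)).toReal with hVdef
  have hvol : volume Ω < ⊤ := hΩb.measure_lt_top
  have hmono : Monotone V := by
    intro a b hab
    apply ENNReal.toReal_mono
    · exact ((measure_mono inter_subset_right).trans_lt hvol).ne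
    · exact measure_mono (inter_subset_inter_left _ (cthickening_mono hab _))
  constructor
  · rintro ⟨h, hpos, ⟨hmeas, hlim⟩, M, hM, hVh⟩
    refine ⟨hmono.measurable.comp measurable_subtype_coe, ?_⟩
    intro t ht
    have hmap : Tendsto (fun y : ℝ => t * y) (𝓝[>] (0:ℝ)) (𝓝[>] (0:ℝ)) := by
      apply tendsto_nhdsWithin_of_tendsto_nhds_of_eventually_within
      · have : Tendsto (fun y : ℝ => t * y) (𝓝 0) (𝓝 (t * 0)) :=
          (continuous_const.mul continuous_id).tendsto 0
        simpa using this.mono_left nhdsWithin_le_nhds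
      · filter_upwards [self_mem_nhdsWithin] with y hy
        exact mul_pos ht hy
    have h1 : Tendsto (fun y => V (t * y) / h (t * y)) (𝓝[>] (0:ℝ)) (𝓝 M) :=
      hVh.comp hmap
    have h2 : Tendsto (fun y => h y / V y) (𝓝[>] (0:ℝ)) (𝓝 M⁻¹) := by
      have := hVh.inv₀ hM.ne'
      refine this.congr fun y => ?_
      rw [← one_div, one_div_div]
    have key : Tendsto (fun y => (V (t * y) / h (t * y)) * (h (t * y) / h y) * (h y / V y))
        (𝓝[>] (0:ℝ)) (𝓝 (M * t ^ ρ * M⁻¹)) := (h1.mul (hlim t ht)).mul h2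
    have heq : (fun y => (V (t * y) / h (t * y)) * (h (t * y) / h y) * (h y / V y))
        =ᶠ[𝓝[>] (0:ℝ)] fun y => V (t * y) / V y := by
      filter_upwards [self_mem_nhdsWithin] with y hy
      have hb : h (t * y) ≠ 0 := (hpos _ (mul_pos ht hy)).ne'
      have hc : h y ≠ 0 := (hpos _ hy).ne'
      field_simp
    have hMconst : M * t ^ ρ * M⁻¹ = t ^ ρ := by
      field_simp
    rw [hMconst] at key
    exact key.congr' heq
  · intro hV
    have h1 := hV.2 1 one_pos
    rw [Real.one_rpow] at h1
    have h2 : ∀ᶠ y in 𝓝[>] (0:ℝ), 0 < V y := by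
      filter_upwards [h1.eventually (eventually_gt_nhds (by norm_num : (0:ℝ) < 1))] with y hy
      by_contra hle
      push_neg at hle
      have hz : V y = 0 := le_antisymm hle ENNReal.toReal_nonneg
      rw [one_mul, hz, div_zero] at hy
      exact lt_irrefl _ hy
    rcases mem_nhdsGT_iff_exists_Ioo_subset.mp h2 with ⟨u, hu, hsub⟩
    have hu0 : (0:ℝ) < u := hu
    have hpos : ∀ y > 0, 0 < V y := by
      intro y hy
      rcases lt_or_ge y u with hlt | hge
      · exact hsub ⟨hy, hlt⟩
      · have : 0 < V (u / 2) := hsub ⟨by linarith, by linarith⟩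
        exact this.trans_le (hmono (by linarith))
    refine ⟨V, hpos, hV, 1, one_pos, ?_⟩
    have : (fun r => V r / V r) =ᶠ[𝓝[>] (0:ℝ)] fun _ => 1 := by
      filter_upwards [self_mem_nhdsWithin] with y hy
      exact div_self (hpos y hy).ne'
    exact tendsto_const_nhds.congr' this.symm
end
end

section
/- Let ρ < −1 and let g : [X,∞) → (0,∞) (X > 0) be regularly varying at ∞ of index ρ and locally bounded on [X,∞). Then: (i) ∫_x^∞ g(u) du ~ −(ρ+1)⁻¹ · x·g(x) as x → ∞; (ii) for every t > 0, (∫_{tx}^∞ g(u) du) / (∫_x^∞ g(u) du) → t^{ρ+1} as x → ∞; (iii) ∑_{j=k}^∞ g(j) ~ −(ρ+1)⁻¹ · k·g(k) as k → ∞ through the integers k ≥ X. -/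
open Filter MeasureTheory Metric Set Topology

noncomputable section

/-!
Write `g x = x ^ ρ * ℓ x` and `k = log ∘ ℓ ∘ exp`, so that `k (y + s) - k y → 0` for every `s`.
As `k` is measurable, a covering argument with the sets where this difference is large
(the uniform convergence theorem) makes the convergence uniform for `s ∈ [0, 1]`; chaining unit
steps then gives Potter's bound `g (t * x) ≤ exp ε * t ^ (ρ + ε) * g x` for `t ≥ 1` and large `x`.
For `ρ + ε < -1` this dominates the integrand in `∫_x^∞ g = x ∫_1^∞ g (x * t) dt`, and dominated
convergence with `g (x * t) / g x → t ^ ρ` and `∫_1^∞ t ^ ρ = -(ρ + 1)⁻¹` gives (i), from which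
(ii) follows. For (iii), uniformity also gives `g (y + s) / g y → 1` uniformly in `s ∈ [0, 1]`, so
each `∫_{k+j}^{k+j+1} g` is `g (k + j)` up to a factor `1 ± ε`, and the tail sum is asymptotic to
the tail integral.
-/

namespace Karamata

open Real

section UniformConvergence

variable {k : ℝ → ℝ}

theorem tendsto_volume_setOf_le_abs_sub (hk : Measurable k)
    (hlim : ∀ s, Tendsto (fun y => k (y + s) - k y) atTop (𝓝 0)) {δ : ℝ} (hδ : 0 < δ)
    (a b : ℝ) :
    Tendsto (fun y => volume {s ∈ Icc a b | δ ≤ |k (y + s) - k y|}) atTop (𝓝 0) := by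
  have := tendsto_measure_of_tendsto_indicator atTop (A := ∅) (μ := volume)
    (As := fun y => {s ∈ Icc a b | δ ≤ |k (y + s) - k y|})
    (fun y => measurableSet_Icc.inter (measurableSet_le measurable_const
      (((hk.comp (measurable_const_add y)).sub_const _).abs)))
    measurableSet_Icc (by simp) (Eventually.of_forall fun y => sep_subset _ _)
    (fun s => ((hlim s).abs.eventually (gt_mem_nhds (by simpa using hδ))).mono
      fun y hy => by simp [hy])
  simpa using this

theorem eventually_forall_Icc_abs_sub_lt (hk : Measurable k)
    (hlim : ∀ s, Tendsto (fun y => k (y + s) - k y) atTop (𝓝 0)) {ε : ℝ} (hε : 0 < ε) :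
    ∀ᶠ y in atTop, ∀ s ∈ Icc (0 : ℝ) 1, |k (y + s) - k y| < ε := by
  set bad := fun y => {u ∈ Icc (0 : ℝ) 3 | ε / 2 ≤ |k (y + u) - k y|}
  obtain ⟨Y, hY⟩ := ((tendsto_volume_setOf_le_abs_sub hk hlim (half_pos hε) 0 3).eventually
    (gt_mem_nhds one_pos)).exists_forall_of_atTop
  filter_upwards [eventually_ge_atTop Y] with y hy s hs
  -- `[1, 3]` has measure `2`, so it is not covered by two sets of measure `< 1`
  obtain ⟨u, hu, hu_good⟩ : ∃ u ∈ Icc (1 : ℝ) 3, u ∉ bad y ∪ (· + -s) ⁻¹' bad (y + s) := by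
    by_contra! hcover
    have hvol := (measure_mono hcover).trans (measure_union_le (μ := volume) _ _)
    rw [measure_preimage_add_right, Real.volume_Icc] at hvol
    have := hvol.trans_lt (ENNReal.add_lt_add (hY y hy) (hY (y + s) (by linarith [hs.1])))
    norm_num at this
  simp only [mem_union, mem_preimage, not_or, bad, mem_ofPred_eq, not_and, not_le] at hu_good
  have h₁ := hu_good.1 ⟨by linarith [hu.1], hu.2⟩
  have h₂ := hu_good.2 ⟨by linarith [hu.1, hs.2], by linarith [hu.2, hs.1]⟩
  rw [show y + s + (u + -s) = y + u by ring] at h₂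
  calc |k (y + s) - k y| = |(k (y + u) - k y) - (k (y + u) - k (y + s))| := by ring_nf
    _ ≤ |k (y + u) - k y| + |k (y + u) - k (y + s)| := abs_sub _ _
    _ < ε := by linarith

theorem eventually_forall_abs_sub_le (hk : Measurable k)
    (hlim : ∀ s, Tendsto (fun y => k (y + s) - k y) atTop (𝓝 0)) {ε : ℝ} (hε : 0 < ε) :
    ∀ᶠ y in atTop, ∀ s, 0 ≤ s → |k (y + s) - k y| ≤ ε * (s + 1) := by
  obtain ⟨Y, hY⟩ := (eventually_forall_Icc_abs_sub_lt hk hlim hε).exists_forall_of_atTop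
  have hsteps : ∀ n : ℕ, ∀ y, Y ≤ y → ∀ s ∈ Icc (0 : ℝ) 1,
      |k (y + n + s) - k y| ≤ ε * (n + 1) := by
    intro n
    induction n with
    | zero => intro y hy s hs; simpa using (hY y hy s hs).le
    | succ n ih =>
      intro y hy s hs
      calc |k (y + ↑(n + 1) + s) - k y|
          = |(k (y + 1 + n + s) - k (y + 1)) + (k (y + 1) - k y)| := by push_cast; ring_nf
        _ ≤ |k (y + 1 + n + s) - k (y + 1)| + |k (y + 1) - k y| := abs_add_le _ _
        _ ≤ ε * (n + 1) + ε :=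
          add_le_add (ih _ (by linarith) s hs) (hY y hy 1 ⟨zero_le_one, le_rfl⟩).le
        _ = ε * (↑(n + 1) + 1) := by push_cast; ring
  filter_upwards [eventually_ge_atTop Y] with y hy s hs
  have hfloor := Nat.floor_le hs
  have := hsteps ⌊s⌋₊ y hy (s - ⌊s⌋₊) ⟨sub_nonneg.2 hfloor, by linarith [Nat.lt_floor_add_one s]⟩
  rw [add_assoc, add_sub_cancel] at this
  exact this.trans (by gcongr)

end UniformConvergence

theorem hasSum_intervalIntegral_add_nat {f : ℝ → ℝ} {y : ℝ} (hf : IntegrableOn f (Ioi y))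
    (hf0 : ∀ u, y ≤ u → 0 ≤ f u) :
    HasSum (fun j : ℕ => ∫ u in (y + j)..(y + j + 1), f u) (∫ u in Ioi y, f u) := by
  have hpartial : ∀ n : ℕ, ∑ j ∈ Finset.range n, ∫ u in (y + j)..(y + j + 1), f u =
      ∫ u in y..(y + n), f u := fun n => by
    simpa [add_assoc] using intervalIntegral.sum_integral_adjacent_intervals
      (a := fun j : ℕ => y + j) (μ := volume) fun j _ =>
        (intervalIntegrable_iff_integrableOn_Ioc_of_le (by simp)).2 <| hf.mono_set fun u hu => by
          simp only [mem_Ioc, mem_Ioi] at hu ⊢; linarith [hu.1, j.cast_nonneg (α := ℝ)]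
  refine (hasSum_iff_tendsto_nat_of_nonneg (fun j => intervalIntegral.integral_nonneg
    (by linarith) fun u hu => hf0 u (by linarith [hu.1, j.cast_nonneg (α := ℝ)])) _).2 ?_
  simp_rw [hpartial]
  exact intervalIntegral_tendsto_integral_Ioi y hf
    (tendsto_atTop_add_const_left _ _ tendsto_natCast_atTop_atTop)

theorem abs_intervalIntegral_sub_le {f : ℝ → ℝ} {a ε : ℝ}
    (hf : IntervalIntegrable f volume a (a + 1))
    (hloc : ∀ s ∈ Icc (0 : ℝ) 1, |f (a + s) - f a| ≤ ε * f a) :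
    |(∫ u in a..(a + 1), f u) - f a| ≤ ε * f a :=
  calc |(∫ u in a..(a + 1), f u) - f a| = ‖∫ u in a..(a + 1), (f u - f a)‖ := by
        simp [intervalIntegral.integral_sub hf intervalIntegrable_const]
    _ ≤ ε * f a * |a + 1 - a| := by
        refine intervalIntegral.norm_integral_le_of_norm_le_const fun u hu => ?_
        rw [uIoc_of_le (by linarith)] at hu
        simpa using hloc (u - a) ⟨by linarith [hu.1], by linarith [hu.2]⟩
    _ = ε * f a := by simp

theorem abs_integral_Ioi_sub_tsum_le {f : ℝ → ℝ} {y ε : ℝ} (hε : ε < 1)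
    (hf : IntegrableOn f (Ioi y)) (hf0 : ∀ u, y ≤ u → 0 ≤ f u)
    (hloc : ∀ z, y ≤ z → ∀ s ∈ Icc (0 : ℝ) 1, |f (z + s) - f z| ≤ ε * f z) :
    Summable (fun j : ℕ => f (y + j)) ∧
      |(∫ u in Ioi y, f u) - ∑' j : ℕ, f (y + j)| ≤ ε * ∑' j : ℕ, f (y + j) := by
  have hI := hasSum_intervalIntegral_add_nat hf hf0
  have hyj (j : ℕ) : y ≤ y + j := le_add_of_nonneg_right j.cast_nonneg
  have hstep (j : ℕ) : |(∫ u in (y + j)..(y + j + 1), f u) - f (y + j)| ≤ ε * f (y + j) :=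
    abs_intervalIntegral_sub_le ((intervalIntegrable_iff_integrableOn_Ioc_of_le (by simp)).2 <|
      hf.mono_set fun u hu => by simp only [mem_Ioc, mem_Ioi] at hu ⊢; linarith [hu.1, hyj j])
      (hloc _ (hyj j))
  have hsum : Summable (fun j : ℕ => f (y + j)) := by
    refine Summable.of_nonneg_of_le (fun j => hf0 _ (hyj j)) (fun j => ?_)
      (hI.summable.mul_left (1 - ε)⁻¹)
    rw [le_inv_mul_iff₀ (by linarith)]
    linarith [(abs_le.1 (hstep j)).1]
  refine ⟨hsum, ?_⟩
  rw [← hI.tsum_eq, ← hI.summable.tsum_sub hsum, ← tsum_mul_left]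
  exact (norm_tsum_le_tsum_norm (hI.summable.sub hsum).norm).trans
    ((hI.summable.sub hsum).norm.tsum_le_tsum hstep (hsum.mul_left ε))

def IsRegularlyVarying (ρ : ℝ) (g : ℝ → ℝ) : Prop :=
  ∀ t : ℝ, 0 < t → Tendsto (fun x => g (t * x) / g x) atTop (𝓝 (t ^ ρ))

/-- Writing `g x = x ^ ρ * ℓ x`, this is `log ∘ ℓ ∘ exp`. -/
def logSlowPart (ρ : ℝ) (g : ℝ → ℝ) (y : ℝ) : ℝ :=
  log (g (exp y)) - ρ * y

def KaramataAsymptotics (ρ : ℝ) (g : ℝ → ℝ) : Prop :=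
  Tendsto (fun x => (∫ u in Set.Ioi x, g u) / (-(ρ + 1)⁻¹ * (x * g x))) atTop (𝓝 1) ∧
    (∀ t : ℝ, 0 < t →
      Tendsto (fun x => (∫ u in Set.Ioi (t * x), g u) / ∫ u in Set.Ioi x, g u) atTop
        (𝓝 (t ^ (ρ + 1)))) ∧
    Tendsto
      (fun k : ℕ => (∑' j : ℕ, g ((k : ℝ) + (j : ℝ))) / (-(ρ + 1)⁻¹ * ((k : ℝ) * g (k : ℝ))))
      atTop (𝓝 1)

section RegularVariation

variable {ρ : ℝ} {g G : ℝ → ℝ}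

theorem IsRegularlyVarying.congr (hg : IsRegularlyVarying ρ g)
    (h : g =ᶠ[atTop] G) : IsRegularlyVarying ρ G := fun t ht =>
  (hg t ht).congr' <| by
    filter_upwards [h, (tendsto_id.const_mul_atTop ht).eventually h] with x hx htx
    rw [hx, show g (t * x) = G (t * x) from htx]

theorem measurable_logSlowPart (hm : Measurable g) : Measurable (logSlowPart ρ g) := by
  unfold logSlowPart
  fun_prop

theorem rpow_mul_exp_logSlowPart {x : ℝ} (hx : 0 < x) (hgx : 0 < g x) :
    x ^ ρ * exp (logSlowPart ρ g (log x)) = g x := by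
  rw [logSlowPart, exp_log hx, exp_sub, exp_log hgx, rpow_def_of_pos hx, mul_comm (log x)]
  field_simp

theorem div_eq_rpow_mul_exp_logSlowPart {x t : ℝ} (hx : 0 < x) (ht : 0 < t) (hgx : 0 < g x)
    (hgtx : 0 < g (t * x)) :
    g (t * x) / g x =
      t ^ ρ * exp (logSlowPart ρ g (log x + log t) - logSlowPart ρ g (log x)) := by
  rw [← rpow_mul_exp_logSlowPart hx hgx, ← rpow_mul_exp_logSlowPart (mul_pos ht hx) hgtx,
    log_mul ht.ne' hx.ne', mul_rpow ht.le hx.le, exp_sub, add_comm (log t)]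
  field_simp

theorem tendsto_logSlowPart_add_sub (hpos : ∀ᶠ x in atTop, 0 < g x)
    (hrv : IsRegularlyVarying ρ g) (s : ℝ) :
    Tendsto (fun y => logSlowPart ρ g (y + s) - logSlowPart ρ g y) atTop (𝓝 0) := by
  have hts : 0 < exp s ^ ρ := rpow_pos_of_pos (exp_pos s) ρ
  have hlim : Tendsto (fun x => log (g (exp s * x) / g x / exp s ^ ρ)) atTop (𝓝 0) := by
    simpa [hts.ne'] using ((hrv _ (exp_pos s)).div_const (exp s ^ ρ)).log (by positivity)
  refine (hlim.comp tendsto_exp_atTop).congr' ?_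
  filter_upwards [tendsto_exp_atTop.eventually hpos,
    (tendsto_exp_atTop.const_mul_atTop (exp_pos s)).eventually hpos] with y hgy hgsy
  rw [Function.comp_apply, div_eq_rpow_mul_exp_logSlowPart (exp_pos y) (exp_pos s) hgy hgsy,
    mul_div_cancel_left₀ _ hts.ne', log_exp, log_exp, log_exp]

theorem eventually_le_exp_mul_rpow (hm : Measurable g) (hpos : ∀ᶠ x in atTop, 0 < g x)
    (hrv : IsRegularlyVarying ρ g) {ε : ℝ} (hε : 0 < ε) :
    ∀ᶠ x in atTop, ∀ t, 1 ≤ t → g (t * x) ≤ exp ε * t ^ (ρ + ε) * g x := by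
  have hL := eventually_forall_abs_sub_le (measurable_logSlowPart hm)
    (tendsto_logSlowPart_add_sub hpos hrv) hε
  filter_upwards [tendsto_log_atTop.eventually hL, eventually_forall_ge_atTop.2 hpos,
    eventually_gt_atTop 0] with x hx hgx hx0 t ht
  have ht0 : 0 < t := by linarith
  have hΔ := (abs_le.1 (hx (log t) (log_nonneg ht))).2
  calc g (t * x) = g x * (g (t * x) / g x) := by field_simp [(hgx x le_rfl).ne']
    _ = g x * (t ^ ρ * exp (logSlowPart ρ g (log x + log t) - logSlowPart ρ g (log x))) := by
      rw [div_eq_rpow_mul_exp_logSlowPart hx0 ht0 (hgx x le_rfl)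
        (hgx _ (le_mul_of_one_le_left hx0.le ht))]
    _ ≤ g x * (t ^ ρ * exp (ε * (log t + 1))) := by
      have := (hgx x le_rfl).le
      gcongr
    _ = exp ε * t ^ (ρ + ε) * g x := by
      rw [rpow_add ht0, rpow_def_of_pos ht0 ε, mul_add, mul_one, exp_add, mul_comm ε]
      ring

theorem exists_rpow_bound (hρ : ρ < -1) (hm : Measurable g) (hpos : ∀ᶠ x in atTop, 0 < g x)
    (hrv : IsRegularlyVarying ρ g) :
    ∃ C p : ℝ, p < -1 ∧ ∀ᶠ x in atTop, ∀ t, 1 ≤ t → g (t * x) ≤ C * t ^ p * g x :=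
  ⟨_, _, by linarith, eventually_le_exp_mul_rpow hm hpos hrv (ε := (-1 - ρ) / 2) (by linarith)⟩

theorem eventually_forall_Icc_abs_log_sub_le (hm : Measurable g)
    (hpos : ∀ᶠ x in atTop, 0 < g x) (hrv : IsRegularlyVarying ρ g) {ε : ℝ} (hε : 0 < ε) :
    ∀ᶠ y in atTop, ∀ s ∈ Icc (0 : ℝ) 1, |log (g (y + s)) - log (g y)| ≤ ε := by
  have hL := eventually_forall_Icc_abs_sub_lt (measurable_logSlowPart hm)
    (tendsto_logSlowPart_add_sub hpos hrv) (half_pos hε)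
  filter_upwards [tendsto_log_atTop.eventually hL, eventually_forall_ge_atTop.2 hpos,
    eventually_ge_atTop 1, eventually_ge_atTop (2 * |ρ| / ε)] with y hy hgy hy1 hyρ s hs
  have hy0 : 0 < y := by linarith
  -- `y + s = t * y` with `0 ≤ log t ≤ s / y ≤ 1 / y`
  set t := 1 + s / y with ht
  have ht1 : 1 ≤ t := le_add_of_nonneg_right (div_nonneg hs.1 hy0.le)
  have hty : t * y = y + s := by rw [ht]; field_simp
  have hlogt : log t ≤ 1 / y :=
    (log_le_sub_one_of_pos (by linarith)).trans
      (by rw [ht, add_sub_cancel_left]; gcongr; exact hs.2)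
  have hlogt0 := log_nonneg ht1
  have ht0 : 0 < t := by linarith
  have hgty : 0 < g (t * y) := by rw [hty]; exact hgy _ (by linarith [hs.1])
  have hratio := div_eq_rpow_mul_exp_logSlowPart (ρ := ρ) hy0 ht0 (hgy y le_rfl) hgty
  rw [hty] at hratio
  have hlog : log (g (y + s)) - log (g y) =
      ρ * log t + (logSlowPart ρ g (log y + log t) - logSlowPart ρ g (log y)) := by
    rw [← log_div (hgy _ (by linarith [hs.1])).ne' (hgy y le_rfl).ne', hratio,
      log_mul (by positivity) (exp_pos _).ne', log_rpow ht0, log_exp]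
  have hΔ := hy (log t) ⟨hlogt0, hlogt.trans (by rw [div_le_one hy0]; exact hy1)⟩
  have hρt : |ρ * log t| ≤ ε / 2 := by
    rw [abs_mul, abs_of_nonneg hlogt0]
    calc |ρ| * log t ≤ |ρ| * (1 / y) := by gcongr
      _ ≤ ε / 2 := by
        rw [div_le_iff₀ hε] at hyρ
        rw [mul_one_div, div_le_iff₀ hy0]
        linarith
  rw [hlog]
  linarith [abs_add_le (ρ * log t) (logSlowPart ρ g (log y + log t) - logSlowPart ρ g (log y))]

theorem eventually_forall_Icc_abs_sub_le_mul (hm : Measurable g)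
    (hpos : ∀ᶠ x in atTop, 0 < g x) (hrv : IsRegularlyVarying ρ g) {ε : ℝ} (hε : 0 < ε) :
    ∀ᶠ y in atTop, ∀ s ∈ Icc (0 : ℝ) 1, |g (y + s) - g y| ≤ ε * g y := by
  obtain ⟨δ, hδ, hexp⟩ := Metric.continuousAt_iff.1 continuous_exp.continuousAt ε hε
  filter_upwards [eventually_forall_Icc_abs_log_sub_le hm hpos hrv (half_pos hδ),
    eventually_forall_ge_atTop.2 hpos] with y hy hgy s hs
  have hgy0 := hgy y le_rfl
  have hgys := hgy (y + s) (by linarith [hs.1])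
  have := hexp (x := log (g (y + s)) - log (g y)) (by
    rw [dist_zero_right, norm_eq_abs]; linarith [hy s hs])
  rw [exp_zero, dist_eq, exp_sub, exp_log hgys, exp_log hgy0, div_sub_one hgy0.ne', abs_div,
    abs_of_pos hgy0, div_lt_iff₀ hgy0] at this
  exact this.le

theorem eventually_integrableOn_Ioi (hρ : ρ < -1) (hm : Measurable g)
    (hpos : ∀ᶠ x in atTop, 0 < g x) (hrv : IsRegularlyVarying ρ g) :
    ∀ᶠ x in atTop, IntegrableOn g (Ioi x) := by
  obtain ⟨C, p, hp, hbound⟩ := exists_rpow_bound hρ hm hpos hrv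
  filter_upwards [hbound, eventually_forall_ge_atTop.2 hpos, eventually_gt_atTop 0]
    with x hx hgx hx0
  have hcomp : IntegrableOn (fun t => g (x * t)) (Ioi 1) := by
    refine Integrable.mono' (((integrableOn_Ioi_rpow_of_lt hp one_pos).const_mul C).mul_const (g x))
      (hm.comp (measurable_const_mul x)).aestronglyMeasurable ?_
    filter_upwards [ae_restrict_mem measurableSet_Ioi] with t (ht : 1 < t)
    rw [norm_of_nonneg (hgx _ (le_mul_of_one_le_right hx0.le ht.le)).le, mul_comm x]
    exact hx t ht.le
  simpa using (integrableOn_Ioi_comp_mul_left_iff g 1 hx0).1 hcomp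

theorem tendsto_integral_Ioi_div_mul (hρ : ρ < -1) (hm : Measurable g)
    (hpos : ∀ᶠ x in atTop, 0 < g x) (hrv : IsRegularlyVarying ρ g) :
    Tendsto (fun x => (∫ u in Ioi x, g u) / (x * g x)) atTop (𝓝 (-(ρ + 1)⁻¹)) := by
  obtain ⟨C, p, hp, hbound⟩ := exists_rpow_bound hρ hm hpos hrv
  -- substitute `u = x * t` and pass to the limit under the integral sign
  have hlim : Tendsto (fun x => ∫ t in Ioi 1, g (x * t) / g x) atTop
      (𝓝 (∫ t in Ioi 1, t ^ ρ)) := by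
    refine tendsto_integral_filter_of_dominated_convergence (fun t => C * t ^ p)
      (Eventually.of_forall fun x =>
        ((hm.comp (measurable_const_mul x)).div_const _).aestronglyMeasurable) ?_
      ((integrableOn_Ioi_rpow_of_lt hp one_pos).const_mul C) ?_
    · filter_upwards [hbound, eventually_forall_ge_atTop.2 hpos, eventually_gt_atTop 0]
        with x hx hgx hx0
      filter_upwards [ae_restrict_mem measurableSet_Ioi] with t (ht : 1 < t)
      rw [norm_of_nonneg (div_nonneg (hgx _ (le_mul_of_one_le_right hx0.le ht.le)).le
        (hgx x le_rfl).le), div_le_iff₀ (hgx x le_rfl), mul_comm x]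
      exact hx t ht.le
    · filter_upwards [ae_restrict_mem measurableSet_Ioi] with t (ht : 1 < t)
      simpa only [mul_comm] using hrv t (by linarith)
  rw [integral_Ioi_rpow_of_lt hρ one_pos, one_rpow, neg_div, one_div] at hlim
  refine hlim.congr' ?_
  filter_upwards [eventually_gt_atTop 0] with x hx0
  rw [integral_div, integral_comp_mul_left_Ioi g 1 hx0, mul_one, smul_eq_mul]
  ring

theorem eventually_integral_Ioi_pos (hρ : ρ < -1) (hm : Measurable g)
    (hpos : ∀ᶠ x in atTop, 0 < g x) (hrv : IsRegularlyVarying ρ g) :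
    ∀ᶠ x in atTop, 0 < ∫ u in Ioi x, g u := by
  have hc : 0 < -(ρ + 1)⁻¹ := neg_pos.2 (inv_lt_zero.2 (by linarith))
  filter_upwards [(tendsto_integral_Ioi_div_mul hρ hm hpos hrv).eventually (lt_mem_nhds hc),
    hpos, eventually_gt_atTop 0] with x hx hgx hx0
  exact (div_pos_iff_of_pos_right (mul_pos hx0 hgx)).1 hx

theorem tendsto_integral_Ioi_div (hρ : ρ < -1) (hm : Measurable g)
    (hpos : ∀ᶠ x in atTop, 0 < g x) (hrv : IsRegularlyVarying ρ g) :
    Tendsto (fun x => (∫ u in Ioi x, g u) / (-(ρ + 1)⁻¹ * (x * g x))) atTop (𝓝 1) := by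
  have hc : -(ρ + 1)⁻¹ ≠ 0 := neg_ne_zero.2 (inv_ne_zero (by linarith : ρ + 1 < 0).ne)
  simpa [div_div, mul_comm, hc] using
    (tendsto_integral_Ioi_div_mul hρ hm hpos hrv).div_const (-(ρ + 1)⁻¹)

theorem tendsto_integral_Ioi_mul_div (hρ : ρ < -1) (hm : Measurable g)
    (hpos : ∀ᶠ x in atTop, 0 < g x) (hrv : IsRegularlyVarying ρ g) {t : ℝ} (ht : 0 < t) :
    Tendsto (fun x => (∫ u in Ioi (t * x), g u) / ∫ u in Ioi x, g u) atTop
      (𝓝 (t ^ (ρ + 1))) := by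
  have hc : -(ρ + 1)⁻¹ ≠ 0 := neg_ne_zero.2 (inv_ne_zero (by linarith : ρ + 1 < 0).ne)
  have hJ := tendsto_integral_Ioi_div_mul hρ hm hpos hrv
  have htx := tendsto_id.const_mul_atTop ht
  have := ((hJ.comp htx).mul ((hrv t ht).const_mul t)).div hJ hc
  rw [mul_div_right_comm, div_self hc, one_mul, ← rpow_one_add' ht.le (by linarith),
    add_comm] at this
  refine this.congr' ?_
  filter_upwards [eventually_integral_Ioi_pos hρ hm hpos hrv, hpos, htx.eventually hpos,
    eventually_gt_atTop 0] with x hIx hgx hgtx hx0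
  simp only [Pi.div_apply, Function.comp_apply, id] at hgtx ⊢
  field_simp

theorem tendsto_integral_Ioi_div_tsum (hρ : ρ < -1) (hm : Measurable g)
    (hpos : ∀ᶠ x in atTop, 0 < g x) (hrv : IsRegularlyVarying ρ g) :
    Tendsto (fun y => (∫ u in Ioi y, g u) / ∑' j : ℕ, g (y + j)) atTop (𝓝 1) := by
  refine Metric.tendsto_nhds.2 fun ε hε => ?_
  set δ := min (ε / 2) (1 / 2)
  have hδ : 0 < δ := by positivity
  filter_upwards [eventually_integrableOn_Ioi hρ hm hpos hrv, eventually_forall_ge_atTop.2 hpos,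
    eventually_forall_ge_atTop.2 (eventually_forall_Icc_abs_sub_le_mul hm hpos hrv hδ)]
    with y hint hgy hloc
  obtain ⟨hsum, hle⟩ := abs_integral_Ioi_sub_tsum_le (by linarith [min_le_right (ε / 2) (1 / 2)])
    hint (fun u hu => (hgy u hu).le) hloc
  have hS : 0 < ∑' j : ℕ, g (y + j) :=
    hsum.tsum_pos (fun j => (hgy _ (le_add_of_nonneg_right j.cast_nonneg)).le) 0
      (by simpa using hgy y le_rfl)
  rw [dist_eq, div_sub_one hS.ne', abs_div, abs_of_pos hS, div_lt_iff₀ hS]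
  exact hle.trans_lt (by nlinarith [min_le_left (ε / 2) (1 / 2)])

theorem tendsto_tsum_div (hρ : ρ < -1) (hm : Measurable g)
    (hpos : ∀ᶠ x in atTop, 0 < g x) (hrv : IsRegularlyVarying ρ g) :
    Tendsto (fun k : ℕ => (∑' j : ℕ, g ((k : ℝ) + (j : ℝ))) / (-(ρ + 1)⁻¹ * ((k : ℝ) * g k)))
      atTop (𝓝 1) := by
  have := (((tendsto_integral_Ioi_div_tsum hρ hm hpos hrv).inv₀ one_ne_zero).mul
    (tendsto_integral_Ioi_div hρ hm hpos hrv)).comp tendsto_natCast_atTop_atTop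
  rw [inv_one, one_mul] at this
  refine this.congr' ?_
  filter_upwards [tendsto_natCast_atTop_atTop.eventually
    (eventually_integral_Ioi_pos hρ hm hpos hrv)] with k hk
  rw [Function.comp_apply, inv_div, div_mul_div_cancel₀ hk.ne']

theorem karamataAsymptotics (hρ : ρ < -1) (hm : Measurable g)
    (hpos : ∀ᶠ x in atTop, 0 < g x) (hrv : IsRegularlyVarying ρ g) :
    KaramataAsymptotics ρ g :=
  ⟨tendsto_integral_Ioi_div hρ hm hpos hrv,
    fun _ ht => tendsto_integral_Ioi_mul_div hρ hm hpos hrv ht,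
    tendsto_tsum_div hρ hm hpos hrv⟩

theorem KaramataAsymptotics.congr (hg : KaramataAsymptotics ρ g)
    (h : g =ᶠ[atTop] G) : KaramataAsymptotics ρ G := by
  obtain ⟨X, hX⟩ := eventually_atTop.1 h
  have hI : ∀ᶠ x in atTop, ∫ u in Ioi x, g u = ∫ u in Ioi x, G u := by
    filter_upwards [eventually_ge_atTop X] with x hx
    exact setIntegral_congr_fun measurableSet_Ioi fun u hu => hX u (hx.trans (le_of_lt hu))
  have hS : ∀ᶠ k : ℕ in atTop, ∑' j : ℕ, g (k + j) = ∑' j : ℕ, G (k + j) := by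
    filter_upwards [tendsto_natCast_atTop_atTop.eventually (eventually_ge_atTop X)] with k hk
    exact tsum_congr fun j => hX _ (hk.trans (le_add_of_nonneg_right j.cast_nonneg))
  obtain ⟨h₁, h₂, h₃⟩ := hg
  refine ⟨h₁.congr' ?_, fun t ht => (h₂ t ht).congr' ?_, h₃.congr' ?_⟩
  · filter_upwards [hI, h] with x hIx hx
    rw [hIx, hx]
  · filter_upwards [hI, (tendsto_id.const_mul_atTop ht).eventually hI] with x hIx hItx
    rw [hIx, show ∫ u in Ioi (t * x), g u = ∫ u in Ioi (t * x), G u from hItx]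
  · filter_upwards [hS, tendsto_natCast_atTop_atTop.eventually h] with k hSk hk
    rw [hSk, hk]

end RegularVariation

end Karamata

theorem statement8_general (ρ : ℝ) (hρ : ρ < -1) (X : ℝ) (g : ℝ → ℝ)
    (hgpos : ∀ x, X ≤ x → 0 < g x)
    (hgmeas : Measurable fun x : Set.Ici X => g x)
    (hgrv : ∀ t : ℝ, 0 < t → Tendsto (fun x => g (t * x) / g x) atTop (𝓝 (t ^ ρ))) :
    Tendsto (fun x => (∫ u in Set.Ioi x, g u) / (-(ρ + 1)⁻¹ * (x * g x))) atTop (𝓝 1) ∧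
    (∀ t : ℝ, 0 < t →
      Tendsto (fun x => (∫ u in Set.Ioi (t * x), g u) / ∫ u in Set.Ioi x, g u) atTop
        (𝓝 (t ^ (ρ + 1)))) ∧
    Tendsto
      (fun k : ℕ => (∑' j : ℕ, g ((k : ℝ) + (j : ℝ))) / (-(ρ + 1)⁻¹ * ((k : ℝ) * g (k : ℝ))))
      atTop (𝓝 1) := by
  obtain ⟨G, hGm, hGext⟩ :=
    (MeasurableEmbedding.subtype_coe measurableSet_Ici).exists_measurable_extend hgmeas
      fun _ => inferInstance
  have hGg : G =ᶠ[atTop] g := eventually_atTop.2 ⟨X, fun x hx => congr_fun hGext ⟨x, hx⟩⟩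
  have hGpos : ∀ᶠ x in atTop, 0 < G x := by
    filter_upwards [hGg, eventually_ge_atTop X] with x hx hxX
    exact hx ▸ hgpos x hxX
  exact (Karamata.karamataAsymptotics hρ hGm hGpos
    (Karamata.IsRegularlyVarying.congr (ρ := ρ) hgrv hGg.symm)).congr hGg

/-- Karamata's theorem (direct half) for a function `g : [X,∞) → (0,∞)` regularly
varying at `∞` of index `ρ < -1` and locally bounded on `[X,∞)`:
(i)  `∫_x^∞ g ~ -(ρ+1)⁻¹ · x·g(x)` as `x → ∞`;
(ii) `(∫_{tx}^∞ g) / (∫_x^∞ g) → t^{ρ+1}` as `x → ∞` for every `t > 0`;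
(iii) `∑_{j=k}^∞ g(j) ~ -(ρ+1)⁻¹ · k·g(k)` as `k → ∞` through the integers. -/
theorem statement8 (ρ : ℝ) (hρ : ρ < -1) (X : ℝ) (hX : 0 < X) (g : ℝ → ℝ)
    (hgpos : ∀ x, X ≤ x → 0 < g x)
    (hgmeas : Measurable fun x : Set.Ici X => g x)
    (hgrv : ∀ t : ℝ, 0 < t → Tendsto (fun x => g (t * x) / g x) atTop (𝓝 (t ^ ρ)))
    (hloc : ∀ b : ℝ, ∃ C : ℝ, ∀ x ∈ Set.Icc X b, g x ≤ C) :
    Tendsto (fun x => (∫ u in Set.Ioi x, g u) / (-(ρ + 1)⁻¹ * (x * g x))) atTop (𝓝 1) ∧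
    (∀ t : ℝ, 0 < t →
      Tendsto (fun x => (∫ u in Set.Ioi (t * x), g u) / ∫ u in Set.Ioi x, g u) atTop
        (𝓝 (t ^ (ρ + 1)))) ∧
    Tendsto
      (fun k : ℕ => (∑' j : ℕ, g ((k : ℝ) + (j : ℝ))) / (-(ρ + 1)⁻¹ * ((k : ℝ) * g (k : ℝ))))
      atTop (𝓝 1) :=
  statement8_general ρ hρ X g hgpos hgmeas hgrv
end
end

section
/- Let (l_j)_{j≥1} be a fractal string with string counting function J(ε) = #{ j : l_j > ε }. Let D ∈ (0,1), h ∈ SR_{1−D}, and let g be defined from h as in the context. Then: (a) l_j ≍ g(j) as j → ∞ if and only if J(ε) ≍ h(ε)/ε as ε → 0⁺; (b) for any L > 0, l_j ~ L·g(j) as j → ∞ if and only if J(ε) ~ L^D·h(ε)/ε as ε → 0⁺; in case (b) holds, J is regularly varying at 0 of index −D. -/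
open Filter MeasureTheory Metric Set Topology

noncomputable section

/-- Smooth variation at `0` of index `ρ`. -/
def SmoothVaryAtZero (h : ℝ → ℝ) (ρ : ℝ) : Prop :=
  RegVaryAtZero h ρ ∧ ∃ y₁ > (0:ℝ), ContDiffOn ℝ 1 h (Set.Ioc 0 y₁)

namespace Statement13Aux

lemma count_eq_iio {l : ℕ → ℝ} (hlmono : Antitone l) (hl0 : Tendsto l atTop (𝓝 0))
    {ε : ℝ} (hε : 0 < ε) :
    ∃ n : ℕ, {i : ℕ | ε < l i} = Set.Iio n := by
  have hev : ∀ᶠ n in atTop, l n < ε := hl0.eventually (eventually_lt_nhds hε)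
  have hex : ∃ n, l n ≤ ε := by
    obtain ⟨N, hN⟩ := hev.exists
    exact ⟨N, hN.le⟩
  refine ⟨Nat.find hex, ?_⟩
  ext i
  simp only [mem_setOf_eq, mem_Iio]
  constructor
  · intro hi
    by_contra hni
    push_neg at hni
    exact absurd (le_trans (hlmono hni) (Nat.find_spec hex)) (not_le.2 hi)
  · intro hi
    exact lt_of_not_ge (Nat.find_min hex hi)

lemma count_finite {l : ℕ → ℝ} (hlmono : Antitone l) (hl0 : Tendsto l atTop (𝓝 0))
    {ε : ℝ} (hε : 0 < ε) : {i : ℕ | ε < l i}.Finite := by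
  obtain ⟨n, hn⟩ := count_eq_iio hlmono hl0 hε
  rw [hn]; exact Set.finite_Iio n

lemma count_iff {l : ℕ → ℝ} (hlmono : Antitone l) (hl0 : Tendsto l atTop (𝓝 0))
    {ε : ℝ} (hε : 0 < ε) (j : ℕ) :
    ε < l j ↔ j < Set.ncard {i : ℕ | ε < l i} := by
  obtain ⟨n, hn⟩ := count_eq_iio hlmono hl0 hε
  have h1 : Set.ncard {i : ℕ | ε < l i} = n := by
    rw [hn, ← Finset.coe_Iio, Set.ncard_coe_finset, Nat.card_Iio]
  rw [h1]
  have := Set.ext_iff.1 hn j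
  simpa using this

variable {h : ℝ → ℝ} {y₀ : ℝ} {g : ℝ → ℝ} {D : ℝ} {l : ℕ → ℝ}

/-- `H(ty)/H(y) → t^D` where `H(y)=y/h(y)`. -/
lemma Hvar (hpos : ∀ y > 0, 0 < h y)
    (hvar : ∀ t : ℝ, 0 < t →
      Tendsto (fun y => h (t * y) / h y) (𝓝[>] (0:ℝ)) (𝓝 (t ^ (1 - D))))
    {t : ℝ} (ht : 0 < t) :
    Tendsto (fun y => (t * y / h (t * y)) / (y / h y)) (𝓝[>] (0:ℝ)) (𝓝 (t ^ D)) := by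
  have h1 : Tendsto (fun y => t * (h y / h (t * y))) (𝓝[>] (0:ℝ))
      (𝓝 (t * (t ^ (1 - D))⁻¹)) := by
    exact (((hvar t ht).inv₀ (ne_of_gt (Real.rpow_pos_of_pos ht _))).const_mul t).congr
      (fun y => by rw [inv_div])
  have h2 : t * (t ^ (1 - D))⁻¹ = t ^ D := by
    rw [← Real.rpow_neg ht.le]
    nth_rewrite 1 [← Real.rpow_one t]
    rw [← Real.rpow_add ht]
    norm_num
  rw [h2] at h1
  refine h1.congr' ?_
  filter_upwards [self_mem_nhdsWithin] with y hy
  have hy : (0:ℝ) < y := hy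
  have hhy := hpos y hy
  have hhty := hpos (t*y) (by positivity)
  field_simp

lemma g_tendsto (hpos : ∀ y > 0, 0 < h y) (hy₀ : 0 < y₀)
    (hH : StrictMonoOn (fun y => y / h y) (Set.Ioc 0 y₀))
    (hg : ∀ᶠ x in atTop, g x ∈ Set.Ioc (0:ℝ) y₀ ∧ g x / h (g x) = 1 / x) :
    Tendsto g atTop (𝓝[>] (0:ℝ)) := by
  rw [tendsto_nhdsWithin_iff]
  constructor
  · refine tendsto_order.2 ⟨fun a ha => ?_, fun b hb => ?_⟩
    · filter_upwards [hg] with x hx; exact lt_of_lt_of_le ha hx.1.1.le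
    · set δ : ℝ := min (b/2) y₀ with hδdef
      have hδ : 0 < δ := lt_min (by linarith) hy₀
      have hδy₀ : δ ∈ Set.Ioc (0:ℝ) y₀ := ⟨hδ, min_le_right _ _⟩
      have hδb : δ < b := lt_of_le_of_lt (min_le_left _ _) (by linarith)
      have hHδ : 0 < δ / h δ := div_pos hδ (hpos δ hδ)
      filter_upwards [hg, eventually_gt_atTop ((δ / h δ)⁻¹), eventually_gt_atTop 0]
        with x hx hx2 hx0
      by_contra hcon
      push_neg at hcon
      have hgb : δ < g x := lt_of_lt_of_le hδb hcon
      have h1 : δ / h δ < g x / h (g x) := hH hδy₀ hx.1 hgb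
      rw [hx.2] at h1
      have : 1 / x < δ / h δ := by
        rw [div_lt_iff₀ hx0]
        calc (1:ℝ) = (δ/h δ) * (δ/h δ)⁻¹ := (mul_inv_cancel₀ (ne_of_gt hHδ)).symm
        _ < (δ/h δ) * x := mul_lt_mul_of_pos_left hx2 hHδ
      linarith
  · filter_upwards [hg] with x hx; exact hx.1.1

lemma H_tendsto (hpos : ∀ y > 0, 0 < h y) (hy₀ : 0 < y₀)
    (hH : StrictMonoOn (fun y => y / h y) (Set.Ioc 0 y₀))
    (hg : ∀ᶠ x in atTop, g x ∈ Set.Ioc (0:ℝ) y₀ ∧ g x / h (g x) = 1 / x) :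
    Tendsto (fun ε => ε / h ε) (𝓝[>] (0:ℝ)) (𝓝[>] (0:ℝ)) := by
  rw [tendsto_nhdsWithin_iff]
  constructor
  · refine tendsto_order.2 ⟨fun a ha => ?_, fun b hb => ?_⟩
    · filter_upwards [self_mem_nhdsWithin] with ε (hε : (0:ℝ) < ε)
      exact lt_of_lt_of_le ha (div_pos hε (hpos ε hε)).le
    · obtain ⟨x, hgx, hx1, hx0⟩ :=
        (hg.and ((eventually_gt_atTop (1/b)).and (eventually_gt_atTop 0))).exists
      have hxb : 1 / x < b := by
        rw [div_lt_iff₀ hx0]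
        calc (1:ℝ) = b * (1/b) := by field_simp
        _ < b * x := mul_lt_mul_of_pos_left hx1 hb
      have : Set.Ioo (0:ℝ) (g x) ∈ 𝓝[>] (0:ℝ) :=
        Ioo_mem_nhdsGT_of_mem ⟨le_rfl, hgx.1.1⟩
      filter_upwards [this] with ε hε
      have hεIoc : ε ∈ Set.Ioc (0:ℝ) y₀ := ⟨hε.1, le_trans hε.2.le hgx.1.2⟩
      have h1 : ε / h ε < g x / h (g x) := hH hεIoc hgx.1 hε.2
      rw [hgx.2] at h1
      linarith
  · filter_upwards [self_mem_nhdsWithin] with ε (hε : (0:ℝ) < ε)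
    exact div_pos hε (hpos ε hε)

lemma hdiv_atTop (hpos : ∀ y > 0, 0 < h y) (hy₀ : 0 < y₀)
    (hH : StrictMonoOn (fun y => y / h y) (Set.Ioc 0 y₀))
    (hg : ∀ᶠ x in atTop, g x ∈ Set.Ioc (0:ℝ) y₀ ∧ g x / h (g x) = 1 / x) :
    Tendsto (fun ε => h ε / ε) (𝓝[>] (0:ℝ)) atTop :=
  ((H_tendsto hpos hy₀ hH hg).inv_tendsto_nhdsGT_zero).congr fun ε => by
    simp [inv_div]

/-- ratio `H(ε)/H(ε/C) → C^D` -/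
lemma ratio_tendsto (hpos : ∀ y > 0, 0 < h y)
    (hvar : ∀ t : ℝ, 0 < t →
      Tendsto (fun y => h (t * y) / h y) (𝓝[>] (0:ℝ)) (𝓝 (t ^ (1 - D))))
    {C : ℝ} (hC : 0 < C) :
    Tendsto (fun ε => (ε / h ε) / ((ε / C) / h (ε / C))) (𝓝[>] (0:ℝ)) (𝓝 (C ^ D)) := by
  have h1 := (Hvar hpos hvar (t := 1/C) (by positivity)).inv₀
    (ne_of_gt (Real.rpow_pos_of_pos (by positivity) _))
  have h2 : ((1/C) ^ D : ℝ)⁻¹ = C ^ D := by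
    rw [one_div, Real.inv_rpow hC.le, inv_inv]
  rw [h2] at h1
  refine h1.congr fun y => ?_
  rw [inv_div, one_div_mul_eq_div]

lemma F_upper (hpos : ∀ y > 0, 0 < h y)
    (hvar : ∀ t : ℝ, 0 < t →
      Tendsto (fun y => h (t * y) / h y) (𝓝[>] (0:ℝ)) (𝓝 (t ^ (1 - D))))
    (hy₀ : 0 < y₀) (hH : StrictMonoOn (fun y => y / h y) (Set.Ioc 0 y₀))
    (hg : ∀ᶠ x in atTop, g x ∈ Set.Ioc (0:ℝ) y₀ ∧ g x / h (g x) = 1 / x)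
    (hlmono : Antitone l) (hl0 : Tendsto l atTop (𝓝 0))
    {C C' : ℝ} (hC : 0 < C) (hC' : C ^ D < C')
    (hl : ∀ᶠ j : ℕ in atTop, l j ≤ C * g (j : ℝ)) :
    ∀ᶠ ε in 𝓝[>] (0:ℝ), (Set.ncard {j : ℕ | ε < l j} : ℝ) ≤ C' * (h ε / ε) := by
  have hgn : ∀ᶠ j : ℕ in atTop,
      g (j:ℝ) ∈ Set.Ioc (0:ℝ) y₀ ∧ g (j:ℝ) / h (g (j:ℝ)) = 1 / (j:ℝ) :=
    tendsto_natCast_atTop_atTop.eventually hg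
  obtain ⟨N, hN⟩ := eventually_atTop.1 (hl.and hgn)
  have hφ : Tendsto (fun ε => ((N:ℝ)+1) * (ε / h ε) + (ε / h ε) / ((ε/C) / h (ε/C)))
      (𝓝[>] (0:ℝ)) (𝓝 (((N:ℝ)+1) * 0 + C ^ D)) :=
    (((H_tendsto hpos hy₀ hH hg).mono_right nhdsWithin_le_nhds).const_mul _).add
      (ratio_tendsto hpos hvar hC)
  have hφ' : ∀ᶠ ε in 𝓝[>] (0:ℝ),
      ((N:ℝ)+1) * (ε / h ε) + (ε / h ε) / ((ε/C) / h (ε/C)) < C' :=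
    hφ.eventually (eventually_lt_nhds (by linarith))
  filter_upwards [hφ', self_mem_nhdsWithin,
    Ioc_mem_nhdsGT_of_mem (Set.mem_Ico.2 ⟨le_rfl, mul_pos hC hy₀⟩)]
    with ε hφε hε hεC
  have hε : (0:ℝ) < ε := hε
  have hεCpos : 0 < ε / C := div_pos hε hC
  have hhεC : 0 < h (ε/C) := hpos _ hεCpos
  have hMpos : 0 < (ε/C) / h (ε/C) := div_pos hεCpos hhεC
  have hhε : 0 < h ε := hpos ε hε
  set n := Set.ncard {j : ℕ | ε < l j} with hn
  have key : (n:ℝ) ≤ ((N:ℝ)+1) + 1/((ε/C)/h (ε/C)) := by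
    by_cases hcase : n ≤ N + 1
    · have h1 : (n:ℝ) ≤ (N:ℝ)+1 := by exact_mod_cast hcase
      have h2 : 0 < 1/((ε/C)/h (ε/C)) := by positivity
      linarith
    · push_neg at hcase
      set j := n - 1 with hj
      have hjn : j < n := by omega
      have hlj : ε < l j := (count_iff hlmono hl0 hε j).2 hjn
      obtain ⟨hbound, hgmem, hgeq⟩ := hN j (by omega)
      have h1 : ε / C < g (j:ℝ) :=
        (div_lt_iff₀ hC).2 (by rw [mul_comm]; linarith)
      have hεCI : ε/C ∈ Set.Ioc (0:ℝ) y₀ :=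
        ⟨hεCpos, (div_le_iff₀ hC).2 (by rw [mul_comm]; exact hεC.2)⟩
      have h2 : (ε/C)/h (ε/C) < g (j:ℝ) / h (g (j:ℝ)) := hH hεCI hgmem h1
      rw [hgeq] at h2
      have hjpos : 0 < (j:ℝ) := by
        have : 0 < j := by omega
        exact_mod_cast this
      have h3 : (j:ℝ) < 1/((ε/C)/h (ε/C)) := by
        have h4 : ((ε/C)/h (ε/C)) * (j:ℝ) < 1 := by
          have := (lt_div_iff₀ hjpos).1 h2
          linarith
        rw [lt_div_iff₀ hMpos]
        linarith
      have hcast : (n:ℝ) = (j:ℝ) + 1 := by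
        have : n = j + 1 := by omega
        rw [this]; push_cast; ring
      have hN0 : (0:ℝ) ≤ (N:ℝ) := Nat.cast_nonneg N
      linarith
  calc (n:ℝ) ≤ ((N:ℝ)+1) + 1/((ε/C)/h (ε/C)) := key
    _ = (((N:ℝ)+1) * (ε / h ε) + (ε / h ε) / ((ε/C) / h (ε/C))) * (h ε / ε) := by
        field_simp
    _ ≤ C' * (h ε / ε) :=
        mul_le_mul_of_nonneg_right hφε.le (by positivity)

lemma F_lower (hpos : ∀ y > 0, 0 < h y)
    (hvar : ∀ t : ℝ, 0 < t →
      Tendsto (fun y => h (t * y) / h y) (𝓝[>] (0:ℝ)) (𝓝 (t ^ (1 - D))))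
    (hy₀ : 0 < y₀) (hH : StrictMonoOn (fun y => y / h y) (Set.Ioc 0 y₀))
    (hg : ∀ᶠ x in atTop, g x ∈ Set.Ioc (0:ℝ) y₀ ∧ g x / h (g x) = 1 / x)
    (hlmono : Antitone l) (hl0 : Tendsto l atTop (𝓝 0))
    {c c' : ℝ} (hc : 0 < c) (hc' : c' < c ^ D)
    (hl : ∀ᶠ j : ℕ in atTop, c * g (j : ℝ) ≤ l j) :
    ∀ᶠ ε in 𝓝[>] (0:ℝ), c' * (h ε / ε) ≤ (Set.ncard {j : ℕ | ε < l j} : ℝ) := by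
  have hgn : ∀ᶠ j : ℕ in atTop,
      g (j:ℝ) ∈ Set.Ioc (0:ℝ) y₀ ∧ g (j:ℝ) / h (g (j:ℝ)) = 1 / (j:ℝ) :=
    tendsto_natCast_atTop_atTop.eventually hg
  obtain ⟨N, hN⟩ := eventually_atTop.1 (hl.and hgn)
  have hψ := ratio_tendsto hpos hvar (C := c) hc
  have hE1 : ∀ᶠ ε in 𝓝[>] (0:ℝ), c' < (ε / h ε) / ((ε/c) / h (ε/c)) :=
    hψ.eventually (eventually_gt_nhds hc')
  have hprod : Tendsto (fun ε => ((ε / h ε) / ((ε/c) / h (ε/c))) * (h ε / ε))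
      (𝓝[>] (0:ℝ)) atTop :=
    hψ.pos_mul_atTop (Real.rpow_pos_of_pos hc D) (hdiv_atTop hpos hy₀ hH hg)
  have hE2 : ∀ᶠ ε in 𝓝[>] (0:ℝ),
      ((N:ℝ)+1) < ((ε / h ε) / ((ε/c) / h (ε/c))) * (h ε / ε) :=
    hprod.eventually_gt_atTop _
  filter_upwards [hE1, hE2, self_mem_nhdsWithin,
    Ioc_mem_nhdsGT_of_mem (Set.mem_Ico.2 ⟨le_rfl, mul_pos hc hy₀⟩)]
    with ε hE1ε hE2ε hε hεc
  have hε : (0:ℝ) < ε := hε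
  have hεcpos : 0 < ε / c := div_pos hε hc
  have hhεc : 0 < h (ε/c) := hpos _ hεcpos
  have hMpos : 0 < (ε/c) / h (ε/c) := div_pos hεcpos hhεc
  have hhε : 0 < h ε := hpos ε hε
  have hinv : ((ε / h ε) / ((ε/c) / h (ε/c))) * (h ε / ε) = 1/((ε/c) / h (ε/c)) := by
    field_simp
  rw [hinv] at hE2ε
  set M := (ε/c) / h (ε/c) with hMdef
  set j : ℕ := ⌈1/M⌉₊ - 1 with hjdef
  have hceil1 : 1 ≤ ⌈1/M⌉₊ := Nat.one_le_iff_ne_zero.2 (by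
    intro h0
    have := Nat.ceil_eq_zero.1 h0
    have h2 : 0 < 1/M := by positivity
    linarith)
  have hjcast : (j:ℝ) = (⌈1/M⌉₊ : ℝ) - 1 := by
    rw [hjdef]; push_cast [Nat.cast_sub hceil1]; ring
  have hjlt : (j:ℝ) < 1/M := by
    have := Nat.ceil_lt_add_one (le_of_lt (show (0:ℝ) < 1/M by positivity))
    rw [hjcast]; linarith
  have hjgtN : (N:ℝ) < (j:ℝ) := by
    have := Nat.le_ceil (1/M)
    rw [hjcast]; linarith
  have hjN : N ≤ j := by exact_mod_cast le_of_lt (Nat.cast_lt.1 hjgtN)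
  obtain ⟨hbound, hgmem, hgeq⟩ := hN j hjN
  have hjpos : 0 < (j:ℝ) := lt_of_le_of_lt (Nat.cast_nonneg N) hjgtN
  have hMlt : M < 1/(j:ℝ) := by
    rw [lt_div_iff₀ hjpos]
    have := (lt_div_iff₀ hMpos).1 hjlt
    linarith
  have h1 : ε / c < g (j:ℝ) := by
    by_contra hcon
    push_neg at hcon
    have hεcI : ε/c ∈ Set.Ioc (0:ℝ) y₀ :=
      ⟨hεcpos, (div_le_iff₀ hc).2 (by rw [mul_comm]; exact hεc.2)⟩
    have h2 : g (j:ℝ) / h (g (j:ℝ)) ≤ (ε/c) / h (ε/c) :=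
      hH.monotoneOn hgmem hεcI hcon
    rw [hgeq] at h2
    have : (1:ℝ)/(j:ℝ) ≤ M := h2
    linarith
  have hlj : ε < l j := by
    have : ε < c * g (j:ℝ) := by
      have := (div_lt_iff₀ hc).1 h1
      linarith [mul_comm (g (j:ℝ)) c]
    linarith
  have hjn : j < Set.ncard {i : ℕ | ε < l i} := (count_iff hlmono hl0 hε j).1 hlj
  have hfinal : 1/M ≤ (Set.ncard {i : ℕ | ε < l i} : ℝ) := by
    have h2 : (⌈1/M⌉₊ : ℕ) ≤ Set.ncard {i : ℕ | ε < l i} := by omega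
    calc 1/M ≤ (⌈1/M⌉₊ : ℝ) := Nat.le_ceil _
      _ ≤ _ := by exact_mod_cast h2
  have hc'le : c' * (h ε / ε) ≤ 1/M := by
    rw [← hinv]
    exact mul_le_mul_of_nonneg_right hE1ε.le (by positivity)
  linarith

/-- common skeleton for the two backward lemmas -/
lemma B_key (hpos : ∀ y > 0, 0 < h y)
    (hvar : ∀ t : ℝ, 0 < t →
      Tendsto (fun y => h (t * y) / h y) (𝓝[>] (0:ℝ)) (𝓝 (t ^ (1 - D))))
    (hy₀ : 0 < y₀) (hH : StrictMonoOn (fun y => y / h y) (Set.Ioc 0 y₀))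
    (hg : ∀ᶠ x in atTop, g x ∈ Set.Ioc (0:ℝ) y₀ ∧ g x / h (g x) = 1 / x)
    {t : ℝ} (ht : 0 < t) :
    (Tendsto (fun j : ℕ => t * g (j:ℝ)) atTop (𝓝[>] (0:ℝ))) ∧
    Tendsto (fun j : ℕ => (t * g (j:ℝ) / h (t * g (j:ℝ))) * (j:ℝ)) atTop (𝓝 (t ^ D)) := by
  have gnat : Tendsto (fun j : ℕ => g (j:ℝ)) atTop (𝓝[>] (0:ℝ)) :=
    (g_tendsto hpos hy₀ hH hg).comp tendsto_natCast_atTop_atTop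
  have hgn : ∀ᶠ j : ℕ in atTop,
      g (j:ℝ) ∈ Set.Ioc (0:ℝ) y₀ ∧ g (j:ℝ) / h (g (j:ℝ)) = 1 / (j:ℝ) :=
    tendsto_natCast_atTop_atTop.eventually hg
  constructor
  · rw [tendsto_nhdsWithin_iff]
    constructor
    · have := ((gnat.mono_right nhdsWithin_le_nhds).const_mul t)
      simpa using this
    · filter_upwards [gnat self_mem_nhdsWithin] with j hj
      exact mul_pos ht hj
  · have hr : Tendsto (fun j : ℕ =>
        (t * g (j:ℝ) / h (t * g (j:ℝ))) / (g (j:ℝ) / h (g (j:ℝ)))) atTop (𝓝 (t ^ D)) :=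
      (Hvar hpos hvar ht).comp gnat
    refine hr.congr' ?_
    filter_upwards [hgn, eventually_gt_atTop 0] with j hj hj0
    have hjpos : (0:ℝ) < (j:ℝ) := by exact_mod_cast hj0
    rw [hj.2, div_div_eq_mul_div, div_one]

lemma B_upper (hpos : ∀ y > 0, 0 < h y)
    (hvar : ∀ t : ℝ, 0 < t →
      Tendsto (fun y => h (t * y) / h y) (𝓝[>] (0:ℝ)) (𝓝 (t ^ (1 - D))))
    (hy₀ : 0 < y₀) (hH : StrictMonoOn (fun y => y / h y) (Set.Ioc 0 y₀))
    (hg : ∀ᶠ x in atTop, g x ∈ Set.Ioc (0:ℝ) y₀ ∧ g x / h (g x) = 1 / x)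
    (hlmono : Antitone l) (hl0 : Tendsto l atTop (𝓝 0))
    {C C' : ℝ} (hC'0 : 0 < C') (hC' : C < C' ^ D)
    (hJ : ∀ᶠ ε in 𝓝[>] (0:ℝ), (Set.ncard {j : ℕ | ε < l j} : ℝ) ≤ C * (h ε / ε)) :
    ∀ᶠ j : ℕ in atTop, l j ≤ C' * g (j:ℝ) := by
  obtain ⟨hsc, hrat⟩ := B_key hpos hvar hy₀ hH hg (t := C') hC'0
  filter_upwards [hsc self_mem_nhdsWithin, hsc.eventually hJ,
    hrat.eventually (eventually_gt_nhds hC')] with j hε hJj hratj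
  set ε := C' * g (j:ℝ) with hεdef
  have hε : (0:ℝ) < ε := hε
  have hhε : 0 < h ε := hpos ε hε
  have hHε : 0 < ε / h ε := div_pos hε hhε
  have hlt : C * (h ε / ε) < (j:ℝ) := by
    have h1 : C < (ε / h ε) * (j:ℝ) := hratj
    have h2 : C * (h ε / ε) = C / (ε / h ε) := by
      field_simp
    rw [h2, div_lt_iff₀ hHε]
    linarith [mul_comm (ε / h ε) (j:ℝ)]
  have hn : (Set.ncard {i : ℕ | ε < l i} : ℝ) < (j:ℝ) := lt_of_le_of_lt hJj hlt
  have hn' : Set.ncard {i : ℕ | ε < l i} ≤ j := by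
    exact_mod_cast le_of_lt (Nat.cast_lt.1 hn)
  by_contra hcon
  push_neg at hcon
  have := (count_iff hlmono hl0 hε j).1 hcon
  omega

lemma B_lower (hpos : ∀ y > 0, 0 < h y)
    (hvar : ∀ t : ℝ, 0 < t →
      Tendsto (fun y => h (t * y) / h y) (𝓝[>] (0:ℝ)) (𝓝 (t ^ (1 - D))))
    (hy₀ : 0 < y₀) (hH : StrictMonoOn (fun y => y / h y) (Set.Ioc 0 y₀))
    (hg : ∀ᶠ x in atTop, g x ∈ Set.Ioc (0:ℝ) y₀ ∧ g x / h (g x) = 1 / x)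
    (hlmono : Antitone l) (hl0 : Tendsto l atTop (𝓝 0))
    {c c' : ℝ} (hc'0 : 0 < c') (hc' : c' ^ D < c)
    (hJ : ∀ᶠ ε in 𝓝[>] (0:ℝ), c * (h ε / ε) ≤ (Set.ncard {j : ℕ | ε < l j} : ℝ)) :
    ∀ᶠ j : ℕ in atTop, c' * g (j:ℝ) ≤ l j := by
  obtain ⟨hsc, hrat⟩ := B_key hpos hvar hy₀ hH hg (t := c') hc'0
  filter_upwards [hsc self_mem_nhdsWithin, hsc.eventually hJ,
    hrat.eventually (eventually_lt_nhds hc')] with j hε hJj hratj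
  set ε := c' * g (j:ℝ) with hεdef
  have hε : (0:ℝ) < ε := hε
  have hhε : 0 < h ε := hpos ε hε
  have hHε : 0 < ε / h ε := div_pos hε hhε
  have hlt : (j:ℝ) < c * (h ε / ε) := by
    have h1 : (ε / h ε) * (j:ℝ) < c := hratj
    have h2 : c * (h ε / ε) = c / (ε / h ε) := by
      field_simp
    rw [h2, lt_div_iff₀ hHε]
    linarith [mul_comm (ε / h ε) (j:ℝ)]
  have hn : (j:ℝ) < (Set.ncard {i : ℕ | ε < l i} : ℝ) := lt_of_lt_of_le hlt hJj
  have hn' : j < Set.ncard {i : ℕ | ε < l i} := Nat.cast_lt.1 hn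
  exact ((count_iff hlmono hl0 hε j).2 hn').le

lemma J_anti (hlmono : Antitone l) (hl0 : Tendsto l atTop (𝓝 0))
    {x y : ℝ} (hx : 0 < x) (hxy : x ≤ y) :
    Set.ncard {j : ℕ | y < l j} ≤ Set.ncard {j : ℕ | x < l j} :=
  Set.ncard_le_ncard (fun j hj => lt_of_le_of_lt hxy hj) (count_finite hlmono hl0 hx)

lemma J_measurable (hlpos : ∀ j, 0 < l j) (hlmono : Antitone l)
    (hl0 : Tendsto l atTop (𝓝 0)) :
    Measurable (fun y : Set.Ioi (0:ℝ) => ((Set.ncard {j : ℕ | (y:ℝ) < l j} : ℝ))) := by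
  have hJn : Measurable (fun ε : ℝ => Set.ncard {j : ℕ | ε < l j}) := by
    apply measurable_to_countable'
    intro n
    have hsplit : (fun ε : ℝ => Set.ncard {j : ℕ | ε < l j}) ⁻¹' {n} =
        (({ε : ℝ | Set.ncard {j : ℕ | ε < l j} = n}) ∩ Set.Iic 0) ∪
        (({ε : ℝ | Set.ncard {j : ℕ | ε < l j} = n}) ∩ Set.Ioi 0) := by
      rw [← Set.inter_union_distrib_left, Set.Iic_union_Ioi, Set.inter_univ]
      rfl
    rw [hsplit]
    apply MeasurableSet.union
    · have h0 : ∀ ε : ℝ, ε ≤ 0 → Set.ncard {j : ℕ | ε < l j} = 0 := by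
        intro ε hε
        have : {j : ℕ | ε < l j} = Set.univ :=
          Set.eq_univ_of_forall fun j => lt_of_le_of_lt hε (hlpos j)
        rw [this, Set.ncard_univ]
        simp [Nat.card_eq_zero_of_infinite]
      by_cases hn : n = 0
      · have : ({ε : ℝ | Set.ncard {j : ℕ | ε < l j} = n}) ∩ Set.Iic 0 = Set.Iic 0 := by
          ext ε
          simp only [Set.mem_inter_iff, Set.mem_setOf_eq, Set.mem_Iic, and_iff_right_iff_imp]
          intro hε
          rw [h0 ε hε, hn]
        rw [this]; exact measurableSet_Iic
      · have : ({ε : ℝ | Set.ncard {j : ℕ | ε < l j} = n}) ∩ Set.Iic 0 = ∅ := by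
          ext ε
          simp only [Set.mem_inter_iff, Set.mem_setOf_eq, Set.mem_Iic, Set.mem_empty_iff_false,
            iff_false, not_and]
          intro hε h2
          exact hn ((h0 ε h2) ▸ hε.symm)
        rw [this]; exact MeasurableSet.empty
    · apply Set.OrdConnected.measurableSet
      constructor
      rintro x ⟨hxn, hx0⟩ z ⟨hzn, hz0⟩ y hy
      have hy0 : (0:ℝ) < y := lt_of_lt_of_le hx0 hy.1
      refine ⟨?_, hy0⟩
      have h1 := J_anti hlmono hl0 hx0 hy.1
      have h2 := J_anti hlmono hl0 hy0 hy.2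
      simp only [Set.mem_setOf_eq] at hxn hzn ⊢
      omega
  exact ((measurable_from_top.comp hJn).comp measurable_subtype_coe)

lemma b_mp (hpos : ∀ y > 0, 0 < h y)
    (hvar : ∀ t : ℝ, 0 < t →
      Tendsto (fun y => h (t * y) / h y) (𝓝[>] (0:ℝ)) (𝓝 (t ^ (1 - D))))
    (hy₀ : 0 < y₀) (hH : StrictMonoOn (fun y => y / h y) (Set.Ioc 0 y₀))
    (hg : ∀ᶠ x in atTop, g x ∈ Set.Ioc (0:ℝ) y₀ ∧ g x / h (g x) = 1 / x)
    (hlmono : Antitone l) (hl0 : Tendsto l atTop (𝓝 0))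
    {L : ℝ} (hL : 0 < L)
    (hT : Tendsto (fun j : ℕ => l j / (L * g (j : ℝ))) atTop (𝓝 1)) :
    Tendsto (fun ε => (Set.ncard {j : ℕ | ε < l j} : ℝ) / (L ^ D * (h ε / ε)))
      (𝓝[>] (0:ℝ)) (𝓝 1) := by
  have hLD : (0:ℝ) < L ^ D := Real.rpow_pos_of_pos hL D
  have hgn : ∀ᶠ j : ℕ in atTop,
      g (j:ℝ) ∈ Set.Ioc (0:ℝ) y₀ ∧ g (j:ℝ) / h (g (j:ℝ)) = 1 / (j:ℝ) :=
    tendsto_natCast_atTop_atTop.eventually hg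
  have hcont : ∀ u : ℝ → ℝ, Tendsto u (𝓝[>] (0:ℝ)) (𝓝 1) →
      Tendsto (fun δ : ℝ => (L * u δ) ^ D) (𝓝[>] (0:ℝ)) (𝓝 (L ^ D)) := by
    intro u hu
    have h1 : Tendsto (fun δ : ℝ => L * u δ) (𝓝[>] (0:ℝ)) (𝓝 L) := by
      have := hu.const_mul L
      simpa using this
    have h2 : ContinuousAt (fun x : ℝ => x ^ D) L :=
      Real.continuousAt_rpow_const L D (Or.inl hL.ne')
    exact h2.tendsto.comp h1
  refine tendsto_order.2 ⟨fun a ha => ?_, fun b hb => ?_⟩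
  · set s : ℝ := max a (1/2) with hs
    have hs1 : s < 1 := max_lt ha (by norm_num)
    have has : a ≤ s := le_max_left _ _
    have hshalf : (1/2 : ℝ) ≤ s := le_max_right _ _
    have hmid : s < (s+1)/2 := by linarith
    have hmid1 : (s+1)/2 < 1 := by linarith
    have hmid0 : 0 < (s+1)/2 := by linarith
    have hu : Tendsto (fun δ : ℝ => (1:ℝ) - δ) (𝓝[>] (0:ℝ)) (𝓝 1) := by
      have hc : Continuous (fun δ : ℝ => (1:ℝ) - δ) := by continuity
      have : Tendsto (fun δ : ℝ => (1:ℝ) - δ) (𝓝 (0:ℝ)) (𝓝 1) := by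
        have := hc.tendsto (0:ℝ)
        norm_num at this
        exact this
      exact this.mono_left nhdsWithin_le_nhds
    have hev : ∀ᶠ δ in 𝓝[>] (0:ℝ), ((s+1)/2) * L ^ D < (L * (1 - δ)) ^ D :=
      (hcont _ hu).eventually (eventually_gt_nhds (by nlinarith))
    obtain ⟨δ, hδ1, hδ2⟩ :=
      (hev.and (Ioo_mem_nhdsGT_of_mem (Set.mem_Ico.2 ⟨le_rfl, one_pos⟩))).exists
    have hcpos : 0 < L * (1 - δ) := mul_pos hL (by linarith [hδ2.2])
    have hlow : ∀ᶠ j : ℕ in atTop, (L * (1 - δ)) * g (j:ℝ) ≤ l j := by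
      filter_upwards [hT.eventually
        (eventually_gt_nhds (show 1 - δ < 1 by linarith [hδ2.1])), hgn] with j hj hgj
      have hgp : 0 < L * g (j:ℝ) := mul_pos hL hgj.1.1
      have h3 : (1 - δ) * (L * g (j:ℝ)) < l j := (lt_div_iff₀ hgp).1 hj
      nlinarith
    have happly := F_lower hpos hvar hy₀ hH hg hlmono hl0 hcpos hδ1 hlow
    filter_upwards [happly, self_mem_nhdsWithin] with ε hJε (hε : (0:ℝ) < ε)
    have hx : 0 < h ε / ε := div_pos (hpos ε hε) hε
    rw [lt_div_iff₀ (by positivity)]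
    have h3 : a * (L^D * (h ε/ε)) < ((s+1)/2) * (L^D * (h ε/ε)) :=
      mul_lt_mul_of_pos_right (by linarith) (by positivity)
    have h4 : ((s+1)/2) * (L^D * (h ε/ε)) = (((s+1)/2) * L^D) * (h ε/ε) := by ring
    linarith
  · have hmid : 1 < (b+1)/2 := by linarith
    have hmidb : (b+1)/2 < b := by linarith
    have hu : Tendsto (fun δ : ℝ => (1:ℝ) + δ) (𝓝[>] (0:ℝ)) (𝓝 1) := by
      have hc : Continuous (fun δ : ℝ => (1:ℝ) + δ) := by continuity
      have : Tendsto (fun δ : ℝ => (1:ℝ) + δ) (𝓝 (0:ℝ)) (𝓝 1) := by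
        have := hc.tendsto (0:ℝ)
        norm_num at this
        exact this
      exact this.mono_left nhdsWithin_le_nhds
    have hev : ∀ᶠ δ in 𝓝[>] (0:ℝ), (L * (1 + δ)) ^ D < ((b+1)/2) * L ^ D :=
      (hcont _ hu).eventually (eventually_lt_nhds (by nlinarith))
    obtain ⟨δ, hδ1, hδ2⟩ := (hev.and self_mem_nhdsWithin).exists
    have hδ2 : (0:ℝ) < δ := hδ2
    have hCpos : 0 < L * (1 + δ) := mul_pos hL (by linarith)
    have hupp : ∀ᶠ j : ℕ in atTop, l j ≤ (L * (1 + δ)) * g (j:ℝ) := by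
      filter_upwards [hT.eventually
        (eventually_lt_nhds (show (1:ℝ) < 1 + δ by linarith)), hgn] with j hj hgj
      have hgp : 0 < L * g (j:ℝ) := mul_pos hL hgj.1.1
      have h3 : l j < (1 + δ) * (L * g (j:ℝ)) := (div_lt_iff₀ hgp).1 hj
      nlinarith
    have happly := F_upper hpos hvar hy₀ hH hg hlmono hl0 hCpos hδ1 hupp
    filter_upwards [happly, self_mem_nhdsWithin] with ε hJε (hε : (0:ℝ) < ε)
    have hx : 0 < h ε / ε := div_pos (hpos ε hε) hε
    rw [div_lt_iff₀ (by positivity)]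
    have h3 : ((b+1)/2) * (L^D * (h ε/ε)) < b * (L^D * (h ε/ε)) :=
      mul_lt_mul_of_pos_right hmidb (by positivity)
    have h4 : ((b+1)/2) * (L^D * (h ε/ε)) = (((b+1)/2) * L^D) * (h ε/ε) := by ring
    linarith

lemma b_mpr (hD0 : 0 < D) (hpos : ∀ y > 0, 0 < h y)
    (hvar : ∀ t : ℝ, 0 < t →
      Tendsto (fun y => h (t * y) / h y) (𝓝[>] (0:ℝ)) (𝓝 (t ^ (1 - D))))
    (hy₀ : 0 < y₀) (hH : StrictMonoOn (fun y => y / h y) (Set.Ioc 0 y₀))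
    (hg : ∀ᶠ x in atTop, g x ∈ Set.Ioc (0:ℝ) y₀ ∧ g x / h (g x) = 1 / x)
    (hlmono : Antitone l) (hl0 : Tendsto l atTop (𝓝 0))
    {L : ℝ} (hL : 0 < L)
    (hT' : Tendsto (fun ε => (Set.ncard {j : ℕ | ε < l j} : ℝ) / (L ^ D * (h ε / ε)))
      (𝓝[>] (0:ℝ)) (𝓝 1)) :
    Tendsto (fun j : ℕ => l j / (L * g (j : ℝ))) atTop (𝓝 1) := by
  have hLD : (0:ℝ) < L ^ D := Real.rpow_pos_of_pos hL D
  have hgn : ∀ᶠ j : ℕ in atTop,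
      g (j:ℝ) ∈ Set.Ioc (0:ℝ) y₀ ∧ g (j:ℝ) / h (g (j:ℝ)) = 1 / (j:ℝ) :=
    tendsto_natCast_atTop_atTop.eventually hg
  refine tendsto_order.2 ⟨fun a ha => ?_, fun b hb => ?_⟩
  · set s : ℝ := max a (1/2) with hs
    have hs1 : s < 1 := max_lt ha (by norm_num)
    have has : a ≤ s := le_max_left _ _
    have hshalf : (1/2 : ℝ) ≤ s := le_max_right _ _
    have hmid : s < (s+1)/2 := by linarith
    have hmid1 : (s+1)/2 < 1 := by linarith
    have hmid0 : 0 < (s+1)/2 := by linarith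
    have hBD1 : ((s+1)/2) ^ D < 1 := Real.rpow_lt_one hmid0.le hmid1 hD0
    have hBDpos : 0 < ((s+1)/2) ^ D := Real.rpow_pos_of_pos hmid0 D
    set θ : ℝ := (((s+1)/2) ^ D + 1)/2 with hθdef
    have hθ1 : θ < 1 := by rw [hθdef]; linarith
    have hθgt : ((s+1)/2) ^ D < θ := by rw [hθdef]; linarith
    have hJlow : ∀ᶠ ε in 𝓝[>] (0:ℝ),
        (θ * L ^ D) * (h ε / ε) ≤ (Set.ncard {j : ℕ | ε < l j} : ℝ) := by
      filter_upwards [hT'.eventually (eventually_gt_nhds hθ1), self_mem_nhdsWithin]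
        with ε h1 (hε : (0:ℝ) < ε)
      have hx : 0 < h ε / ε := div_pos (hpos ε hε) hε
      have h2 : θ * (L^D * (h ε/ε)) < (Set.ncard {j : ℕ | ε < l j} : ℝ) :=
        (lt_div_iff₀ (by positivity)).1 h1
      nlinarith
    have hc' : (((s+1)/2) * L) ^ D < θ * L ^ D := by
      rw [Real.mul_rpow hmid0.le hL.le]
      exact mul_lt_mul_of_pos_right hθgt hLD
    have happly := B_lower hpos hvar hy₀ hH hg hlmono hl0
      (mul_pos hmid0 hL) hc' hJlow
    filter_upwards [happly, hgn] with j hj hgj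
    have hgp : 0 < L * g (j:ℝ) := mul_pos hL hgj.1.1
    rw [lt_div_iff₀ hgp]
    have h3 : a * (L * g (j:ℝ)) < ((s+1)/2) * (L * g (j:ℝ)) :=
      mul_lt_mul_of_pos_right (by linarith) hgp
    have h4 : ((s+1)/2) * (L * g (j:ℝ)) = (((s+1)/2) * L) * g (j:ℝ) := by ring
    linarith
  · set B : ℝ := (b+1)/2 with hBdef
    have hB1 : 1 < B := by rw [hBdef]; linarith
    have hBb : B < b := by rw [hBdef]; linarith
    have hBD : 1 < B ^ D :=
      (Real.one_lt_rpow_iff_of_pos (by linarith)).2 (Or.inl ⟨hB1, hD0⟩)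
    set θ : ℝ := (1 + B ^ D)/2 with hθdef
    have hθ1 : 1 < θ := by rw [hθdef]; linarith
    have hθB : θ < B ^ D := by rw [hθdef]; linarith
    have hJupp : ∀ᶠ ε in 𝓝[>] (0:ℝ),
        (Set.ncard {j : ℕ | ε < l j} : ℝ) ≤ (θ * L ^ D) * (h ε / ε) := by
      filter_upwards [hT'.eventually (eventually_lt_nhds hθ1), self_mem_nhdsWithin]
        with ε h1 (hε : (0:ℝ) < ε)
      have hx : 0 < h ε / ε := div_pos (hpos ε hε) hε
      have h2 : (Set.ncard {j : ℕ | ε < l j} : ℝ) < θ * (L^D * (h ε/ε)) :=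
        (div_lt_iff₀ (by positivity)).1 h1
      nlinarith
    have hC' : θ * L ^ D < (B * L) ^ D := by
      rw [Real.mul_rpow (by linarith : (0:ℝ) ≤ B) hL.le]
      exact mul_lt_mul_of_pos_right hθB hLD
    have happly := B_upper hpos hvar hy₀ hH hg hlmono hl0
      (mul_pos (by linarith : (0:ℝ) < B) hL) hC' hJupp
    filter_upwards [happly, hgn] with j hj hgj
    have hgp : 0 < L * g (j:ℝ) := mul_pos hL hgj.1.1
    rw [div_lt_iff₀ hgp]
    have h3 : B * (L * g (j:ℝ)) < b * (L * g (j:ℝ)) := mul_lt_mul_of_pos_right hBb hgp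
    have h4 : B * (L * g (j:ℝ)) = (B * L) * g (j:ℝ) := by ring
    linarith

lemma reg_vary (hpos : ∀ y > 0, 0 < h y)
    (hvar : ∀ t : ℝ, 0 < t →
      Tendsto (fun y => h (t * y) / h y) (𝓝[>] (0:ℝ)) (𝓝 (t ^ (1 - D))))
    (hlpos : ∀ j, 0 < l j) (hlmono : Antitone l) (hl0 : Tendsto l atTop (𝓝 0))
    {L : ℝ} (hL : 0 < L)
    (hT' : Tendsto (fun ε => (Set.ncard {j : ℕ | ε < l j} : ℝ) / (L ^ D * (h ε / ε)))
      (𝓝[>] (0:ℝ)) (𝓝 1)) :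
    RegVaryAtZero (fun ε => (Set.ncard {j : ℕ | ε < l j} : ℝ)) (-D) := by
  have hLD : (0:ℝ) < L ^ D := Real.rpow_pos_of_pos hL D
  refine ⟨J_measurable hlpos hlmono hl0, fun t ht => ?_⟩
  have hmul : Tendsto (fun ε : ℝ => t * ε) (𝓝[>] (0:ℝ)) (𝓝[>] (0:ℝ)) := by
    rw [tendsto_nhdsWithin_iff]
    constructor
    · have hc : Continuous (fun ε : ℝ => t * ε) := by continuity
      have := hc.tendsto (0:ℝ)
      norm_num at this
      exact this.mono_left nhdsWithin_le_nhds
    · filter_upwards [self_mem_nhdsWithin] with ε (hε : (0:ℝ) < ε)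
      exact mul_pos ht hε
  have R1 := hT'.comp hmul
  have R2 := (Hvar hpos hvar ht).inv₀ (ne_of_gt (Real.rpow_pos_of_pos ht D))
  have R3 := hT'.inv₀ one_ne_zero
  have hprod := (R1.mul R2).mul R3
  have hlim : ((1 : ℝ) * (t ^ D)⁻¹) * 1⁻¹ = t ^ (-D) := by
    rw [Real.rpow_neg ht.le]; ring
  rw [hlim] at hprod
  refine hprod.congr' ?_
  have hJpos : ∀ᶠ ε in 𝓝[>] (0:ℝ), (0:ℝ) < (Set.ncard {j : ℕ | ε < l j} : ℝ) := by
    filter_upwards [hT'.eventually (eventually_gt_nhds (by norm_num : (1:ℝ)/2 < 1)),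
      self_mem_nhdsWithin] with ε h1 (hε : (0:ℝ) < ε)
    have hx : 0 < L ^ D * (h ε / ε) := mul_pos hLD (div_pos (hpos ε hε) hε)
    nlinarith [(lt_div_iff₀ hx).1 h1]
  filter_upwards [hJpos, self_mem_nhdsWithin] with ε hJε (hε : (0:ℝ) < ε)
  have htε : 0 < t * ε := mul_pos ht hε
  have h1 : 0 < h ε := hpos ε hε
  have h2 : 0 < h (t * ε) := hpos _ htε
  have hJne : (Set.ncard {j : ℕ | ε < l j} : ℝ) ≠ 0 := ne_of_gt hJε
  simp only [Function.comp]
  field_simp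

end Statement13Aux

open Statement13Aux in
/-- For a fractal string `(l_j)` with string counting function `J(ε) = #{j : l_j > ε}`,
`D ∈ (0,1)`, `h ∈ SR_{1-D}` and `g(x) = H⁻¹(1/x)` where `H(y) = y/h(y)`:
(a) `l_j ≍ g(j)` iff `J(ε) ≍ h(ε)/ε`;
(b) for `L > 0`, `l_j ~ L·g(j)` iff `J(ε) ~ L^D·h(ε)/ε`, and in that case `J` is
regularly varying at `0` of index `-D`. -/
theorem statement13 (D : ℝ) (hD : D ∈ Set.Ioo (0:ℝ) 1)
    (h : ℝ → ℝ) (hpos : ∀ y > 0, 0 < h y) (hsv : SmoothVaryAtZero h (1 - D))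
    (y₀ : ℝ) (hy₀ : 0 < y₀) (hH : StrictMonoOn (fun y => y / h y) (Set.Ioc 0 y₀))
    (g : ℝ → ℝ) (hg : ∀ᶠ x in atTop, g x ∈ Set.Ioc (0:ℝ) y₀ ∧ g x / h (g x) = 1 / x)
    (l : ℕ → ℝ) (hlpos : ∀ j, 0 < l j) (hlmono : Antitone l) (hlsum : Summable l) :
    ((∃ c C : ℝ, 0 < c ∧ 0 < C ∧
        ∀ᶠ j : ℕ in atTop, c * g (j : ℝ) ≤ l j ∧ l j ≤ C * g (j : ℝ)) ↔
      (∃ c C : ℝ, 0 < c ∧ 0 < C ∧ ∀ᶠ ε in 𝓝[>] (0:ℝ),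
        c * (h ε / ε) ≤ (Set.ncard {j : ℕ | ε < l j} : ℝ) ∧
          (Set.ncard {j : ℕ | ε < l j} : ℝ) ≤ C * (h ε / ε))) ∧
    (∀ L : ℝ, 0 < L →
      ((Tendsto (fun j : ℕ => l j / (L * g (j : ℝ))) atTop (𝓝 1)) ↔
        Tendsto (fun ε => (Set.ncard {j : ℕ | ε < l j} : ℝ) / (L ^ D * (h ε / ε)))
          (𝓝[>] (0:ℝ)) (𝓝 1)) ∧
      (Tendsto (fun j : ℕ => l j / (L * g (j : ℝ))) atTop (𝓝 1) →
        RegVaryAtZero (fun ε => (Set.ncard {j : ℕ | ε < l j} : ℝ)) (-D))) := by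
  obtain ⟨hD0, hD1⟩ := hD
  have hl0 : Tendsto l atTop (𝓝 0) := hlsum.tendsto_atTop_zero
  have hvar := hsv.1.2
  have hDne : D ≠ 0 := ne_of_gt hD0
  refine ⟨⟨?_, ?_⟩, fun L hL => ?_⟩
  · rintro ⟨c, C, hc, hC, hev⟩
    have hcD : (0:ℝ) < c ^ D := Real.rpow_pos_of_pos hc D
    have hCD : (0:ℝ) < C ^ D := Real.rpow_pos_of_pos hC D
    refine ⟨c ^ D / 2, C ^ D + 1, by positivity, by positivity, ?_⟩
    have h1 := F_lower hpos hvar hy₀ hH hg hlmono hl0 hc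
      (show c ^ D / 2 < c ^ D by linarith) (hev.mono fun j hj => hj.1)
    have h2 := F_upper hpos hvar hy₀ hH hg hlmono hl0 hC
      (lt_add_one _) (hev.mono fun j hj => hj.2)
    filter_upwards [h1, h2] with ε he1 he2
    exact ⟨he1, he2⟩
  · rintro ⟨c, C, hc, hC, hev⟩
    have hpow : ∀ x : ℝ, 0 < x → (x ^ (1/D)) ^ D = x := by
      intro x hx
      rw [← Real.rpow_mul hx.le, one_div_mul_cancel hDne, Real.rpow_one]
    refine ⟨(c/2) ^ (1/D), (C+1) ^ (1/D),
      Real.rpow_pos_of_pos (by linarith) _, Real.rpow_pos_of_pos (by linarith) _, ?_⟩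
    have h1 := B_lower hpos hvar hy₀ hH hg hlmono hl0
      (Real.rpow_pos_of_pos (by linarith : (0:ℝ) < c/2) (1/D))
      (show ((c/2) ^ (1/D)) ^ D < c by rw [hpow _ (by linarith)]; linarith)
      (hev.mono fun ε he => he.1)
    have h2 := B_upper hpos hvar hy₀ hH hg hlmono hl0
      (Real.rpow_pos_of_pos (by linarith : (0:ℝ) < C+1) (1/D))
      (show C < ((C+1) ^ (1/D)) ^ D by rw [hpow _ (by linarith)]; linarith)
      (hev.mono fun ε he => he.2)
    filter_upwards [h1, h2] with j he1 he2
    exact ⟨he1, he2⟩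
  · constructor
    · exact ⟨fun hT => b_mp hpos hvar hy₀ hH hg hlmono hl0 hL hT,
        fun hT' => b_mpr hD0 hpos hvar hy₀ hH hg hlmono hl0 hL hT'⟩
    · intro hT
      exact reg_vary hpos hvar hlpos hlmono hl0 hL
        (b_mp hpos hvar hy₀ hH hg hlmono hl0 hL hT)


end
end

section
/- Let D ∈ (0,1), h ∈ SR_{1−D}, and let g be defined from h as in the context. Let (l_j)_{j≥1} be a fractal string with string counting function J(ε) = #{ j : l_j > ε }, and assume l_j ≍ g(j) as j → ∞. Then ∑_{j > J(2ε)} l_j ≍ h(ε) as ε → 0⁺. -/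
open Filter MeasureTheory Metric Set Topology

noncomputable section

lemma tail_sum_bound (G lf : ℕ → ℝ) (s t c₀ C₀ : ℝ)
    (hs0 : 0 < s) (hs1 : 2*s < 1) (ht : 0 < t) (hc₀ : 0 < c₀) (hC₀ : 0 < C₀)
    (hlsum : Summable lf) (N : ℕ)
    (hGpos : ∀ j, N ≤ j → 0 < G j)
    (hGanti : ∀ j k, N ≤ j → j ≤ k → G k ≤ G j)
    (hGhalf : ∀ j, N ≤ j → t * G j ≤ G (2*j) ∧ G (2*j) ≤ s * G j)
    (hsim : ∀ j, N ≤ j → c₀ * G j ≤ lf j ∧ lf j ≤ C₀ * G j)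
    (n : ℕ) (hn : N ≤ n) (hn1 : 1 ≤ n) :
    c₀ * t * (n * G n) ≤ (∑' i, lf (n + i)) ∧
      (∑' i, lf (n + i)) ≤ (C₀ / (1 - 2*s)) * (n * G n) := by
  have hNn : ∀ i, N ≤ n + i := fun i => hn.trans (Nat.le_add_right n i)
  have hlsum' : Summable (fun i => lf (n + i)) := by
    have := (summable_nat_add_iff n).2 hlsum
    simpa [add_comm] using this
  have hGle : ∀ i, G (n + i) ≤ lf (n + i) / c₀ := by
    intro i
    rw [le_div_iff₀ hc₀, mul_comm]
    exact (hsim _ (hNn i)).1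
  have hGsum : Summable (fun i => G (n + i)) :=
    Summable.of_nonneg_of_le (fun i => (hGpos _ (hNn i)).le) hGle (hlsum'.div_const c₀)
  set A := ∑' i, G (n + i) with hA
  -- even/odd bound for the tail starting at 2n
  have hle_ev : ∀ m, G (2*n + 2*m) ≤ s * G (n + m) := by
    intro m
    have h2 : 2*n + 2*m = 2*(n+m) := by ring
    rw [h2]
    exact (hGhalf _ (hNn m)).2
  have hle_od : ∀ m, G (2*n + (2*m+1)) ≤ s * G (n + m) := by
    intro m
    have h1 : G (2*n + (2*m+1)) ≤ G (2*(n+m)) :=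
      hGanti _ _ (le_trans (hNn m) (by omega)) (by omega)
    exact h1.trans (hGhalf _ (hNn m)).2
  have hsmul : Summable (fun m => s * G (n + m)) := hGsum.mul_left s
  have hEv : Summable (fun m => G (2*n + 2*m)) :=
    Summable.of_nonneg_of_le (fun m => (hGpos _ (by omega)).le) hle_ev hsmul
  have hOd : Summable (fun m => G (2*n + (2*m+1))) :=
    Summable.of_nonneg_of_le (fun m => (hGpos _ (by omega)).le) hle_od hsmul
  have hB : (∑' i, G (2*n + i)) = (∑' m, G (2*n + 2*m)) + ∑' m, G (2*n + (2*m+1)) := by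
    exact (tsum_even_add_odd (f := fun i => G (2*n + i)) hEv hOd).symm
  have hBle : (∑' i, G (2*n + i)) ≤ 2*s*A := by
    rw [hB]
    have h1 : (∑' m, G (2*n + 2*m)) ≤ ∑' m, s * G (n + m) :=
      Summable.tsum_le_tsum hle_ev hEv hsmul
    have h2 : (∑' m, G (2*n + (2*m+1))) ≤ ∑' m, s * G (n + m) :=
      Summable.tsum_le_tsum hle_od hOd hsmul
    have h3 : (∑' m, s * G (n + m)) = s * A := tsum_mul_left
    linarith
  -- split A
  have hsplit : (∑ i ∈ Finset.range n, G (n + i)) + (∑' i, G (2*n + i)) = A := by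
    have := Summable.sum_add_tsum_nat_add (f := fun i => G (n + i)) n hGsum
    have heq : (fun i => G (n + (i + n))) = fun i => G (2*n + i) := by
      funext i; congr 1; omega
    rw [heq] at this
    exact this
  have hfin_up : (∑ i ∈ Finset.range n, G (n + i)) ≤ n * G n := by
    calc (∑ i ∈ Finset.range n, G (n + i)) ≤ ∑ _i ∈ Finset.range n, G n :=
          Finset.sum_le_sum (fun i _ => hGanti _ _ hn (Nat.le_add_right n i))
      _ = n * G n := by simp [mul_comm]
  have hfin_lo : t * (n * G n) ≤ ∑ i ∈ Finset.range n, G (n + i) := by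
    have h1 : ∀ i ∈ Finset.range n, G (2*n) ≤ G (n + i) := by
      intro i hi
      exact hGanti _ _ (hNn i) (by simp at hi; omega)
    calc t * (n * G n) = n * (t * G n) := by ring
      _ ≤ n * G (2*n) := by
          have := (hGhalf n hn).1
          have hn0 : (0:ℝ) ≤ (n:ℝ) := Nat.cast_nonneg n
          exact mul_le_mul_of_nonneg_left this hn0
      _ = ∑ _i ∈ Finset.range n, G (2*n) := by simp [mul_comm]
      _ ≤ ∑ i ∈ Finset.range n, G (n + i) := Finset.sum_le_sum h1
  have hApos : 0 ≤ A := tsum_nonneg (fun i => (hGpos _ (hNn i)).le)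
  have hBnn : 0 ≤ ∑' i, G (2*n + i) := tsum_nonneg (fun i => (hGpos _ (by omega)).le)
  have hAup : A ≤ (n * G n) / (1 - 2*s) := by
    have h1 : A ≤ n * G n + 2*s*A := by
      have := hsplit
      nlinarith [hBle, hfin_up]
    rw [le_div_iff₀ (by linarith : (0:ℝ) < 1 - 2*s)]
    nlinarith
  have hAlo : t * (n * G n) ≤ A := by nlinarith [hfin_lo, hBnn, hsplit]
  -- compare with lf
  have hlow : c₀ * A ≤ ∑' i, lf (n + i) := by
    have h1 : (∑' i, c₀ * G (n + i)) ≤ ∑' i, lf (n + i) :=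
      Summable.tsum_le_tsum (fun i => (hsim _ (hNn i)).1) (hGsum.mul_left c₀) hlsum'
    rwa [tsum_mul_left] at h1
  have hup : (∑' i, lf (n + i)) ≤ C₀ * A := by
    have h1 : (∑' i, lf (n + i)) ≤ ∑' i, C₀ * G (n + i) :=
      Summable.tsum_le_tsum (fun i => (hsim _ (hNn i)).2) hlsum' (hGsum.mul_left C₀)
    rwa [tsum_mul_left] at h1
  constructor
  · calc c₀ * t * (n * G n) = c₀ * (t * (n * G n)) := by ring
      _ ≤ c₀ * A := mul_le_mul_of_nonneg_left hAlo hc₀.le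
      _ ≤ _ := hlow
  · calc (∑' i, lf (n + i)) ≤ C₀ * A := hup
      _ ≤ C₀ * ((n * G n) / (1 - 2*s)) := mul_le_mul_of_nonneg_left hAup hC₀.le
      _ = (C₀ / (1 - 2*s)) * (n * G n) := by ring


lemma counting_eq (l : ℕ → ℝ) (hmono : Antitone l) (hsum : Summable l)
    (ε : ℝ) (hε : 0 < ε) :
    ∃ N : ℕ, {j : ℕ | 2*ε < l j} = Set.Iio N ∧ Set.ncard {j : ℕ | 2*ε < l j} = N := by
  have htend : Tendsto l atTop (𝓝 0) := hsum.tendsto_atTop_zero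
  have hev : ∀ᶠ j in atTop, l j < 2*ε := htend.eventually_lt_const (by linarith)
  have hne : ∃ n, l n ≤ 2*ε := by
    obtain ⟨M, hM⟩ := hev.exists
    exact ⟨M, hM.le⟩
  refine ⟨Nat.find hne, ?_, ?_⟩
  · ext j
    simp only [Set.mem_setOf_eq, Set.mem_Iio]
    constructor
    · intro hj
      by_contra hjN
      push_neg at hjN
      have h1 : l j ≤ l (Nat.find hne) := hmono hjN
      have h2 := Nat.find_spec hne
      linarith
    · intro hj
      have := Nat.find_min hne hj
      push_neg at this
      linarith
  · rw [show {j : ℕ | 2*ε < l j} = Set.Iio (Nat.find hne) from ?_]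
    · rw [← Finset.coe_Iio, Set.ncard_coe_finset, Nat.card_Iio]
    · ext j
      simp only [Set.mem_setOf_eq, Set.mem_Iio]
      constructor
      · intro hj
        by_contra hjN
        push_neg at hjN
        have h1 : l j ≤ l (Nat.find hne) := hmono hjN
        have h2 := Nat.find_spec hne
        linarith
      · intro hj
        have := Nat.find_min hne hj
        push_neg at this
        linarith



set_option maxHeartbeats 1600000 in
/-- For a fractal string `(l_j)` with `l_j ≍ g(j)` (with `g(x) = H⁻¹(1/x)`,
`H(y) = y/h(y)`, `h ∈ SR_{1-D}`, `D ∈ (0,1)`), the tail sums past the string counting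
function `J(2ε) = #{j : l_j > 2ε}` satisfy `∑_{j > J(2ε)} l_j ≍ h(ε)` as `ε → 0⁺`. -/
theorem statement14 (D : ℝ) (hD : D ∈ Set.Ioo (0:ℝ) 1)
    (h : ℝ → ℝ) (hpos : ∀ y > 0, 0 < h y) (hsv : SmoothVaryAtZero h (1 - D))
    (y₀ : ℝ) (hy₀ : 0 < y₀) (hH : StrictMonoOn (fun y => y / h y) (Set.Ioc 0 y₀))
    (g : ℝ → ℝ) (hg : ∀ᶠ x in atTop, g x ∈ Set.Ioc (0:ℝ) y₀ ∧ g x / h (g x) = 1 / x)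
    (l : ℕ → ℝ) (hlpos : ∀ j, 0 < l j) (hlmono : Antitone l) (hlsum : Summable l)
    (hsim : ∃ c C : ℝ, 0 < c ∧ 0 < C ∧
      ∀ᶠ j : ℕ in atTop, c * g (j : ℝ) ≤ l j ∧ l j ≤ C * g (j : ℝ)) :
    ∃ c C : ℝ, 0 < c ∧ 0 < C ∧ ∀ᶠ ε in 𝓝[>] (0:ℝ),
      c * h ε ≤ (∑' i : ℕ, l (Set.ncard {j : ℕ | 2 * ε < l j} + i)) ∧
        (∑' i : ℕ, l (Set.ncard {j : ℕ | 2 * ε < l j} + i)) ≤ C * h ε := by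
  obtain ⟨hD0, hD1⟩ := hD
  obtain ⟨⟨_, hreg⟩, _⟩ := hsv
  set Hf : ℝ → ℝ := fun y => y / h y with hHfdef
  have Hpos : ∀ y : ℝ, 0 < y → 0 < Hf y := fun y hy => div_pos hy (hpos y hy)
  -- regular variation of Hf of index D
  have hHrv : ∀ t : ℝ, 0 < t →
      Tendsto (fun y => Hf (t*y) / Hf y) (𝓝[>] (0:ℝ)) (𝓝 (t ^ D)) := by
    intro t ht
    have h1 := hreg t ht
    have hne : (t:ℝ) ^ (1 - D) ≠ 0 := (Real.rpow_pos_of_pos ht _).ne'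
    have h2 : Tendsto (fun y => t / (h (t*y) / h y)) (𝓝[>] (0:ℝ)) (𝓝 (t / t ^ (1-D))) :=
      tendsto_const_nhds.div h1 hne
    have hlim : t / t ^ (1-D) = t ^ D := by
      rw [div_eq_iff hne, ← Real.rpow_add ht, show D + (1-D) = 1 by ring, Real.rpow_one]
    rw [← hlim]
    refine h2.congr' ?_
    filter_upwards [self_mem_nhdsWithin] with y hy
    have hy0 : (0:ℝ) < y := hy
    have hhy := hpos y hy0
    have hhty := hpos (t*y) (mul_pos ht hy0)
    simp only [Hf]
    field_simp
  -- constants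
  set t₁ : ℝ := (1/2 : ℝ) ^ (2 * D⁻¹) with ht₁def
  have ht₁pos : 0 < t₁ := Real.rpow_pos_of_pos one_half_pos _
  have ht₁lt1 : t₁ < 1 :=
    Real.rpow_lt_one (by norm_num) (by norm_num) (by positivity)
  have ht₁D : t₁ ^ D = 1/4 := by
    rw [ht₁def, ← Real.rpow_mul (by norm_num : (0:ℝ) ≤ 1/2)]
    rw [show 2 * D⁻¹ * D = 2 by field_simp]
    rw [show (2:ℝ) = ((2:ℕ):ℝ) by norm_num, Real.rpow_natCast]
    norm_num
  set σ : ℝ := (1 + D⁻¹)/2 with hσdef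
  have hDinv : 1 < D⁻¹ := by
    rw [← one_div, lt_div_iff₀ hD0]
    linarith
  have hσ1 : 1 < σ := by rw [hσdef]; linarith
  set s : ℝ := (1/2 : ℝ) ^ σ with hsdef
  have hspos : 0 < s := Real.rpow_pos_of_pos one_half_pos _
  have hs2 : 2*s < 1 := by
    have : s < (1/2:ℝ) ^ (1:ℝ) :=
      Real.rpow_lt_rpow_of_exponent_gt (by norm_num) (by norm_num) hσ1
    rw [Real.rpow_one] at this
    linarith
  have hsD : 1/2 < s ^ D := by
    rw [hsdef, ← Real.rpow_mul (by norm_num : (0:ℝ) ≤ 1/2)]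
    have hσD : σ * D < 1 := by
      have hd : D⁻¹ * D = 1 := inv_mul_cancel₀ hD0.ne'
      have he : σ * D = (D + 1)/2 := by rw [hσdef]; field_simp
      rw [he]; linarith
    have : (1/2:ℝ) ^ (1:ℝ) < (1/2:ℝ) ^ (σ*D) :=
      Real.rpow_lt_rpow_of_exponent_gt (by norm_num) (by norm_num) hσD
    rw [Real.rpow_one] at this
    linarith
  -- g properties
  obtain ⟨X₀', hX₀'⟩ := eventually_atTop.1 hg
  set X₀ : ℝ := max X₀' 1 with hX₀def
  have hX₀1 : (1:ℝ) ≤ X₀ := le_max_right _ _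
  have hX₀ : ∀ x : ℝ, X₀ ≤ x → 0 < g x ∧ g x ≤ y₀ ∧ Hf (g x) = 1/x := by
    intro x hx
    have h1 := hX₀' x ((le_max_left _ _).trans hx)
    exact ⟨h1.1.1, h1.1.2, h1.2⟩
  have hxpos : ∀ x : ℝ, X₀ ≤ x → (0:ℝ) < x := fun x hx => lt_of_lt_of_le one_pos (hX₀1.trans hx)
  have hganti : ∀ x1 x2 : ℝ, X₀ ≤ x1 → x1 ≤ x2 → g x2 ≤ g x1 := by
    intro x1 x2 hx1 hx12
    rcases eq_or_lt_of_le hx12 with rfl | hlt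
    · exact le_refl _
    have h1 := hX₀ x1 hx1
    have h2 := hX₀ x2 (hx1.trans hx12)
    have hx1p := hxpos x1 hx1
    have hHlt : Hf (g x2) < Hf (g x1) := by
      rw [h1.2.2, h2.2.2]
      exact one_div_lt_one_div_of_lt hx1p hlt
    exact ((hH.lt_iff_lt ⟨h2.1, h2.2.1⟩ ⟨h1.1, h1.2.1⟩).1 hHlt).le
  have hgto : Tendsto g atTop (𝓝[>] (0:ℝ)) := by
    rw [tendsto_nhdsWithin_iff]
    constructor
    · rw [tendsto_order]
      constructor
      · intro a ha
        filter_upwards [eventually_ge_atTop X₀] with x hx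
        exact lt_of_lt_of_le ha ((hX₀ x hx).1.le.trans (le_refl _)) |>.trans_le (le_refl _)
      · intro δ hδ
        set δ' : ℝ := min δ y₀ with hδ'def
        have hδ'0 : 0 < δ' := lt_min hδ hy₀
        have hδ'y : δ' ≤ y₀ := min_le_right _ _
        have hHδ' : 0 < Hf δ' := Hpos _ hδ'0
        filter_upwards [eventually_ge_atTop X₀, eventually_ge_atTop (2/Hf δ')] with x hx hx2
        have h1 := hX₀ x hx
        have hxp := hxpos x hx
        have hlt : Hf (g x) < Hf δ' := by
          rw [h1.2.2]
          rw [div_le_iff₀ hHδ'] at hx2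
          rw [div_lt_iff₀ hxp]
          nlinarith
        have : g x < δ' := (hH.lt_iff_lt ⟨h1.1, h1.2.1⟩ ⟨hδ'0, hδ'y⟩).1 hlt
        exact this.trans_le (min_le_left _ _)
    · filter_upwards [eventually_ge_atTop X₀] with x hx
      exact (hX₀ x hx).1
  have hghalf : ∀ᶠ x in atTop, t₁ * g x ≤ g (2*x) ∧ g (2*x) ≤ s * g x := by
    have P1 : ∀ᶠ y in 𝓝[>] (0:ℝ), Hf (t₁*y) / Hf y < 1/2 :=
      (hHrv t₁ ht₁pos).eventually_lt_const (by rw [ht₁D]; norm_num)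
    have P2 : ∀ᶠ y in 𝓝[>] (0:ℝ), 1/2 < Hf (s*y) / Hf y :=
      (hHrv s hspos).eventually_const_lt hsD
    filter_upwards [hgto.eventually P1, hgto.eventually P2, eventually_ge_atTop X₀,
      eventually_ge_atTop 1] with x h1 h2 hx h1x
    have hx2 : X₀ ≤ 2*x := by linarith
    have hgx := hX₀ x hx
    have hg2x := hX₀ (2*x) hx2
    have hxp := hxpos x hx
    have hHgx : 0 < Hf (g x) := Hpos _ hgx.1
    have hkey : Hf (g (2*x)) = Hf (g x) / 2 := by
      rw [hgx.2.2, hg2x.2.2]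
      field_simp
    constructor
    · -- t₁ * g x < g (2*x)
      have hlt : Hf (t₁ * g x) < Hf (g (2*x)) := by
        rw [hkey]
        rw [div_lt_iff₀ hHgx] at h1
        linarith
      have hmem1 : t₁ * g x ∈ Set.Ioc (0:ℝ) y₀ :=
        ⟨mul_pos ht₁pos hgx.1, le_trans (by nlinarith [hgx.1]) hgx.2.1⟩
      exact ((hH.lt_iff_lt hmem1 ⟨hg2x.1, hg2x.2.1⟩).1 hlt).le
    · -- g (2*x) < s * g x
      have hlt : Hf (g (2*x)) < Hf (s * g x) := by
        rw [hkey]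
        rw [lt_div_iff₀ hHgx] at h2
        linarith
      have hmem1 : s * g x ∈ Set.Ioc (0:ℝ) y₀ :=
        ⟨mul_pos hspos hgx.1, le_trans (by nlinarith [hgx.1, hs2, hspos]) hgx.2.1⟩
      exact ((hH.lt_iff_lt ⟨hg2x.1, hg2x.2.1⟩ hmem1).1 hlt).le
  -- thresholds on the integer side
  obtain ⟨X₁, hX₁⟩ := eventually_atTop.1 hghalf
  obtain ⟨c₀, C₀, hc₀, hC₀, hsimev⟩ := hsim
  obtain ⟨Ns, hNs⟩ := eventually_atTop.1 hsimev
  set N : ℕ := max (max Ns ⌈max X₀ X₁⌉₊) 1 with hNdef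
  have hNcast : ∀ j : ℕ, N ≤ j → X₀ ≤ (j:ℝ) ∧ X₁ ≤ (j:ℝ) := by
    intro j hj
    have h0 : ⌈max X₀ X₁⌉₊ ≤ j := le_trans (le_trans (le_max_right Ns _) (le_max_left _ 1)) hj
    have h1 : ((⌈max X₀ X₁⌉₊ : ℕ) : ℝ) ≤ (j:ℝ) := Nat.cast_le.2 h0
    have h2 : max X₀ X₁ ≤ ((⌈max X₀ X₁⌉₊ : ℕ) : ℝ) := Nat.le_ceil _
    exact ⟨(le_max_left X₀ X₁).trans (h2.trans h1), (le_max_right X₀ X₁).trans (h2.trans h1)⟩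
  have hGpos : ∀ j : ℕ, N ≤ j → 0 < g (j:ℝ) := fun j hj => (hX₀ _ (hNcast j hj).1).1
  have hGanti : ∀ j k : ℕ, N ≤ j → j ≤ k → g (k:ℝ) ≤ g (j:ℝ) :=
    fun j k hj hjk => hganti _ _ (hNcast j hj).1 (Nat.cast_le.2 hjk)
  have hGhalf : ∀ j : ℕ, N ≤ j →
      t₁ * g (j:ℝ) ≤ g ((2*j : ℕ):ℝ) ∧ g ((2*j : ℕ):ℝ) ≤ s * g (j:ℝ) := by
    intro j hj
    rw [show ((2*j : ℕ):ℝ) = 2*(j:ℝ) by push_cast; ring]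
    exact hX₁ _ (hNcast j hj).2
  have hsimN : ∀ j : ℕ, N ≤ j → c₀ * g (j:ℝ) ≤ l j ∧ l j ≤ C₀ * g (j:ℝ) :=
    fun j hj => hNs j (le_trans (le_trans (le_max_left Ns _) (le_max_left _ 1)) hj)
  have htail := tail_sum_bound (fun j : ℕ => g (j:ℝ)) l s t₁ c₀ C₀ hspos hs2 ht₁pos hc₀ hC₀
    hlsum N hGpos hGanti hGhalf hsimN
  -- final constants
  set b : ℝ := 2/c₀ with hbdef
  have hb : 0 < b := by positivity
  set a : ℝ := 2*t₁/C₀ with hadef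
  have ha : 0 < a := by positivity
  have hbD : (0:ℝ) < b^D + 1 := by
    have : 0 < b^D := Real.rpow_pos_of_pos hb D
    linarith
  have haD : (0:ℝ) < a^D := Real.rpow_pos_of_pos ha D
  refine ⟨c₀*t₁*a/(b^D+1), (C₀/(1-2*s))*(b/(a^D/2)), ?_, ?_, ?_⟩
  · exact div_pos (mul_pos (mul_pos hc₀ ht₁pos) ha) hbD
  · exact mul_pos (div_pos hC₀ (by linarith)) (div_pos hb (by linarith))
  -- eventual facts in ε
  have hidto : Tendsto (fun ε : ℝ => ε) (𝓝[>] (0:ℝ)) (𝓝 0) :=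
    tendsto_id.mono_right nhdsWithin_le_nhds
  have P3 : ∀ᶠ ε in 𝓝[>] (0:ℝ), Hf (b*ε)/Hf ε < b^D + 1 :=
    (hHrv b hb).eventually_lt_const (lt_add_one _)
  have P4 : ∀ᶠ ε in 𝓝[>] (0:ℝ), a^D/2 < Hf (a*ε)/Hf ε :=
    (hHrv a ha).eventually_const_lt (by linarith)
  have hbεev : ∀ᶠ ε in 𝓝[>] (0:ℝ), b*ε ≤ y₀ := by
    filter_upwards [hidto.eventually_lt_const (div_pos hy₀ hb)] with ε hε
    rw [lt_div_iff₀ hb] at hε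
    linarith
  have hJbig : ∀ᶠ ε in 𝓝[>] (0:ℝ), ∀ j ≤ N+1, 2*ε < l j := by
    filter_upwards [hidto.eventually_lt_const (half_pos (hlpos (N+1)))] with ε hε j hj
    have := hlmono hj
    linarith
  filter_upwards [self_mem_nhdsWithin, P3, P4, hbεev, hJbig] with ε hεm hP3 hP4 hbε hJb
  have hε0 : (0:ℝ) < ε := hεm
  obtain ⟨Nε, hset, hncard⟩ := counting_eq l hlmono hlsum ε hε0
  rw [hncard]
  have hNεbig : N+2 ≤ Nε := by
    have hmem : (N+1 : ℕ) ∈ {j : ℕ | 2*ε < l j} := hJb (N+1) le_rfl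
    rw [hset] at hmem
    simp only [Set.mem_Iio] at hmem
    omega
  have hJN : N ≤ Nε := by omega
  have hlJ : l Nε ≤ 2*ε := by
    have hnm : Nε ∉ Set.Iio Nε := by simp
    rw [← hset] at hnm
    simp only [Set.mem_setOf_eq, not_lt] at hnm
    exact hnm
  obtain ⟨K, hK⟩ : ∃ K, Nε = K+1 := ⟨Nε-1, by omega⟩
  have hKN : N ≤ K := by omega
  have hlK : 2*ε < l K := by
    have : K ∈ Set.Iio Nε := by simp; omega
    rw [← hset] at this
    exact this
  have hXJ := hNcast Nε hJN
  have hXK := hNcast K hKN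
  have hgJ := hX₀ (Nε:ℝ) hXJ.1
  -- upper bound on g Nε
  have hgJub : g (Nε:ℝ) ≤ b*ε := by
    have h1 : c₀ * g (Nε:ℝ) ≤ 2*ε := le_trans (hsimN Nε hJN).1 hlJ
    rw [hbdef]
    rw [div_mul_eq_mul_div, le_div_iff₀ hc₀]
    linarith
  -- lower bound on g Nε
  have hgJlb : a*ε ≤ g (Nε:ℝ) := by
    have h1 : 2*ε ≤ C₀ * g (K:ℝ) := le_of_lt (lt_of_lt_of_le hlK (hsimN K hKN).2)
    have h2 : t₁ * g (K:ℝ) ≤ g (2*(K:ℝ)) := (hX₁ (K:ℝ) hXK.2).1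
    have hK1 : (1:ℝ) ≤ (K:ℝ) := by exact_mod_cast (by omega : 1 ≤ K)
    have h3 : g (2*(K:ℝ)) ≤ g (Nε:ℝ) := by
      apply hganti _ _ hXJ.1
      rw [hK]; push_cast; linarith
    have h4 : t₁ * g (K:ℝ) ≤ g (Nε:ℝ) := h2.trans h3
    have h5 : t₁*(2*ε) ≤ t₁*(C₀ * g (K:ℝ)) := mul_le_mul_of_nonneg_left h1 ht₁pos.le
    have h6 : C₀*(t₁ * g (K:ℝ)) ≤ C₀ * g (Nε:ℝ) := mul_le_mul_of_nonneg_left h4 hC₀.le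
    rw [hadef, div_mul_eq_mul_div, div_le_iff₀ hC₀]
    linarith
  -- the identity h (g Nε) = Nε * g Nε
  have hJp : (0:ℝ) < (Nε:ℝ) := by exact_mod_cast (by omega : 0 < Nε)
  have hhgpos : 0 < h (g (Nε:ℝ)) := hpos _ hgJ.1
  have hid : h (g (Nε:ℝ)) = (Nε:ℝ) * g (Nε:ℝ) := by
    have h5 := hgJ.2.2
    simp only [Hf] at h5
    rw [div_eq_div_iff hhgpos.ne' hJp.ne'] at h5
    linarith
  -- H comparisons
  have hmono := hH.monotoneOn
  have hgJmem : g (Nε:ℝ) ∈ Set.Ioc (0:ℝ) y₀ := ⟨hgJ.1, hgJ.2.1⟩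
  have hεb : b*ε ∈ Set.Ioc (0:ℝ) y₀ := ⟨mul_pos hb hε0, hbε⟩
  have hεa : a*ε ∈ Set.Ioc (0:ℝ) y₀ := ⟨mul_pos ha hε0, hgJlb.trans hgJ.2.1⟩
  have hc1 : Hf (g (Nε:ℝ)) ≤ Hf (b*ε) := hmono hgJmem hεb hgJub
  have hc2 : Hf (a*ε) ≤ Hf (g (Nε:ℝ)) := hmono hεa hgJmem hgJlb
  have hHε : 0 < Hf ε := Hpos ε hε0
  have hHgJpos : 0 < Hf (g (Nε:ℝ)) := Hpos _ hgJ.1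
  have hP3' : Hf (g (Nε:ℝ)) ≤ (b^D+1) * Hf ε := by
    rw [div_lt_iff₀ hHε] at hP3
    linarith
  have hP4' : (a^D/2) * Hf ε ≤ Hf (g (Nε:ℝ)) := by
    rw [lt_div_iff₀ hHε] at hP4
    linarith
  have hfe : Hf ε * h ε = ε := by
    simp only [Hf]
    rw [div_mul_cancel₀ _ (hpos ε hε0).ne']
  have hfg : Hf (g (Nε:ℝ)) * h (g (Nε:ℝ)) = g (Nε:ℝ) := by
    simp only [Hf]
    rw [div_mul_cancel₀ _ hhgpos.ne']
  have ht := htail Nε hJN (by omega)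
  have hhεpos : 0 < h ε := hpos ε hε0
  constructor
  · -- lower bound
    have hkey2 : a * h ε ≤ (b^D+1) * h (g (Nε:ℝ)) := by
      have h6 : a * ε ≤ g (Nε:ℝ) := hgJlb
      rw [← hfe, ← hfg] at h6
      have h7 : Hf (g (Nε:ℝ)) * h (g (Nε:ℝ)) ≤ ((b^D+1) * Hf ε) * h (g (Nε:ℝ)) :=
        mul_le_mul_of_nonneg_right hP3' hhgpos.le
      have h8 : Hf ε * (a * h ε) ≤ Hf ε * ((b^D+1) * h (g (Nε:ℝ))) := by
        calc Hf ε * (a * h ε) = a * (Hf ε * h ε) := by ring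
          _ ≤ Hf (g (Nε:ℝ)) * h (g (Nε:ℝ)) := h6
          _ ≤ ((b^D+1) * Hf ε) * h (g (Nε:ℝ)) := h7
          _ = Hf ε * ((b^D+1) * h (g (Nε:ℝ))) := by ring
      exact le_of_mul_le_mul_left h8 hHε
    have h9 : c₀*t₁/(b^D+1) * (a * h ε) ≤ c₀*t₁/(b^D+1) * ((b^D+1) * h (g (Nε:ℝ))) :=
      mul_le_mul_of_nonneg_left hkey2 (by positivity)
    have h10 : c₀*t₁/(b^D+1) * ((b^D+1) * h (g (Nε:ℝ))) = c₀*t₁* h (g (Nε:ℝ)) := by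
      field_simp
    have h11 : c₀*t₁/(b^D+1) * (a * h ε) = c₀*t₁*a/(b^D+1) * h ε := by ring
    calc c₀*t₁*a/(b^D+1) * h ε = c₀*t₁/(b^D+1) * (a * h ε) := h11.symm
      _ ≤ c₀*t₁* h (g (Nε:ℝ)) := h10 ▸ h9
      _ = c₀*t₁*((Nε:ℝ) * g (Nε:ℝ)) := by rw [hid]
      _ ≤ _ := ht.1
  · -- upper bound
    have hkey3 : (a^D/2) * h (g (Nε:ℝ)) ≤ b * h ε := by
      have h6 : g (Nε:ℝ) ≤ b * ε := hgJub
      rw [← hfe, ← hfg] at h6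
      have h7 : ((a^D/2) * Hf ε) * h (g (Nε:ℝ)) ≤ Hf (g (Nε:ℝ)) * h (g (Nε:ℝ)) :=
        mul_le_mul_of_nonneg_right hP4' hhgpos.le
      have h8 : Hf ε * ((a^D/2) * h (g (Nε:ℝ))) ≤ Hf ε * (b * h ε) := by
        calc Hf ε * ((a^D/2) * h (g (Nε:ℝ))) = ((a^D/2) * Hf ε) * h (g (Nε:ℝ)) := by ring
          _ ≤ Hf (g (Nε:ℝ)) * h (g (Nε:ℝ)) := h7
          _ ≤ b * (Hf ε * h ε) := h6
          _ = Hf ε * (b * h ε) := by ring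
      exact le_of_mul_le_mul_left h8 hHε
    have h9 : (C₀/(1-2*s))/(a^D/2) * ((a^D/2) * h (g (Nε:ℝ))) ≤
        (C₀/(1-2*s))/(a^D/2) * (b * h ε) := by
      apply mul_le_mul_of_nonneg_left hkey3
      have h12 : (0:ℝ) < 1-2*s := by linarith
      positivity
    have h10 : (C₀/(1-2*s))/(a^D/2) * ((a^D/2) * h (g (Nε:ℝ))) =
        (C₀/(1-2*s)) * h (g (Nε:ℝ)) := by
      have hyne : (a^D/2) ≠ 0 := by positivity
      rw [← mul_assoc, div_mul_cancel₀ _ hyne]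
    have h11 : (C₀/(1-2*s))/(a^D/2) * (b * h ε) = (C₀/(1-2*s))*(b/(a^D/2)) * h ε := by
      ring
    calc (∑' i, l (Nε + i)) ≤ (C₀/(1-2*s))*((Nε:ℝ) * g (Nε:ℝ)) := ht.2
      _ = (C₀/(1-2*s)) * h (g (Nε:ℝ)) := by rw [hid]
      _ = (C₀/(1-2*s))/(a^D/2) * ((a^D/2) * h (g (Nε:ℝ))) := h10.symm
      _ ≤ (C₀/(1-2*s))/(a^D/2) * (b * h ε) := h9
      _ = (C₀/(1-2*s))*(b/(a^D/2)) * h ε := h11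
end
end

section
/- Let D ∈ (0,1), h ∈ SR_{1−D}, and let g and f be defined from h as in the context. Let (l_j)_{j≥1} be a fractal string with l_j ≍ g(j) as j → ∞. Then the packing defect δ(x) = ∑_{j=1}^∞ {l_j x} satisfies δ(x) ≍ f(x) as x → ∞. -/
/-!
Write `H y = y / h y`, so that `H (g n) = 1 / n` and `x * h (1 / x) = 1 / H (1 / x)`. Since `H`
is regularly varying of index `D ∈ (0, 1)`, the sequence `g n` satisfies
`a * g n ≤ g (2 * n) ≤ q * g n` for some `a > 0` and `q < 1 / 2`, and this gives the tail estimate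
`∑_{j ≥ N} g j ≍ N * g N`. Split `δ x` at the index `N ≈ x * h (1 / x)` where `g N ≈ 1 / x`: the
first `N` terms contribute at most `N`, the tail at most `x * ∑_{j ≥ N} l j ≲ x * N * g N ≲ N`.
Conversely, once `C * g j < 1 / x` every fractional part `{l j * x}` is `l j * x` itself, and these
terms alone sum to `≳ x * N * g N ≳ N`.
-/

open Filter MeasureTheory Metric Set Topology

noncomputable section

lemma exists_lt_half_half_lt_rpow {D : ℝ} (hD : D < 1) :
    ∃ q : ℝ, 0 < q ∧ q < 1 / 2 ∧ 1 / 2 < q ^ D := by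
  have half_lt : (1 / 2 : ℝ) < (1 / 2) ^ D := by
    simpa using Real.rpow_lt_rpow_of_exponent_gt (by norm_num : (0:ℝ) < 1 / 2) (by norm_num) hD
  have hnear : ∀ᶠ q in 𝓝[<] (1 / 2 : ℝ), 1 / 2 < q ^ D :=
    nhdsWithin_le_nhds <| (Real.continuousAt_rpow_const _ _ (Or.inl (by norm_num))).eventually
      (lt_mem_nhds half_lt)
  obtain ⟨q, hq, hq_mem⟩ := (hnear.and (Ioo_mem_nhdsLT (by norm_num : (0:ℝ) < 1 / 2))).exists
  exact ⟨q, hq_mem.1, hq_mem.2, hq⟩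

lemma exists_rpow_lt_half {D : ℝ} (hD : 0 < D) :
    ∃ a : ℝ, 0 < a ∧ a ≤ 1 ∧ a ^ D < 1 / 2 := by
  refine ⟨(1 / 4) ^ D⁻¹, by positivity, Real.rpow_le_one (by norm_num) (by norm_num)
    (inv_nonneg.2 hD.le), ?_⟩
  rw [Real.rpow_inv_rpow (by norm_num) hD.ne']
  norm_num

namespace RegVaryAtZero

variable {h : ℝ → ℝ} {ρ : ℝ}

lemma id_div (hpos : ∀ y > 0, 0 < h y) (hh : RegVaryAtZero h ρ) :
    RegVaryAtZero (fun y => y / h y) (1 - ρ) := by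
  refine ⟨measurable_subtype_coe.div hh.1, fun t ht => ?_⟩
  have hlim := (tendsto_const_nhds (x := t)).div (hh.2 t ht) (Real.rpow_pos_of_pos ht ρ).ne'
  rw [show t / t ^ ρ = t ^ (1 - ρ) by rw [Real.rpow_sub ht, Real.rpow_one]] at hlim
  refine hlim.congr' ?_
  filter_upwards [self_mem_nhdsWithin] with y (hy : 0 < y)
  have := hpos y hy
  have := hpos (t * y) (mul_pos ht hy)
  rw [Pi.div_apply]
  field_simp

lemma eventually_lt_mul (hpos : ∀ y > 0, 0 < h y) (hh : RegVaryAtZero h ρ) {t γ : ℝ}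
    (ht : 0 < t) (hγ : t ^ ρ < γ) : ∀ᶠ y in 𝓝[>] 0, h (t * y) < γ * h y := by
  filter_upwards [(hh.2 t ht).eventually_lt_const hγ, self_mem_nhdsWithin] with y hy (hy0 : 0 < y)
  exact (div_lt_iff₀ (hpos y hy0)).1 hy

lemma eventually_mul_lt (hpos : ∀ y > 0, 0 < h y) (hh : RegVaryAtZero h ρ) {t γ : ℝ}
    (ht : 0 < t) (hγ : γ < t ^ ρ) : ∀ᶠ y in 𝓝[>] 0, γ * h y < h (t * y) := by
  filter_upwards [(hh.2 t ht).eventually_const_lt hγ, self_mem_nhdsWithin] with y hy (hy0 : 0 < y)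
  exact (lt_div_iff₀ (hpos y hy0)).1 hy

end RegVaryAtZero

section DoublingTail

variable {s : ℕ → ℝ} {M N : ℕ}

lemma tsum_nat_add_two_mul_le (hs : Summable s) (hanti : AntitoneOn s (Ici M)) {q : ℝ}
    (hdouble : ∀ n ≥ M, s (2 * n) ≤ q * s n) (hN : M ≤ N) :
    ∑' i, s (i + 2 * N) ≤ 2 * q * ∑' i, s (i + N) := by
  have hsN : Summable fun i => s (i + N) := (summable_nat_add_iff N).2 hs
  have hs2N : Summable fun i => s (i + 2 * N) := (summable_nat_add_iff (2 * N)).2 hs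
  have heven_le : ∀ i, s (2 * i + 2 * N) ≤ q * s (i + N) := fun i => by
    simpa [mul_add] using hdouble (i + N) (by omega)
  have hodd_le : ∀ i, s (2 * i + 1 + 2 * N) ≤ q * s (i + N) := fun i =>
    (hanti (a := 2 * i + 2 * N) (mem_Ici.2 (by omega)) (mem_Ici.2 (by omega)) (by omega)).trans
      (heven_le i)
  have heven : Summable fun i => s (2 * i + 2 * N) :=
    hs2N.comp_injective (mul_right_injective₀ two_ne_zero)
  have hodd : Summable fun i => s (2 * i + 1 + 2 * N) :=
    hs2N.comp_injective fun a b hab => by simpa using hab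
  have he := Summable.tsum_le_tsum heven_le heven (hsN.mul_left q)
  have ho := Summable.tsum_le_tsum hodd_le hodd (hsN.mul_left q)
  rw [tsum_mul_left] at he ho
  have hsplit : ∑' i, s (2 * i + 2 * N) + ∑' i, s (2 * i + 1 + 2 * N) = ∑' i, s (i + 2 * N) :=
    tsum_even_add_odd (f := fun i => s (i + 2 * N)) heven hodd
  linarith

lemma tsum_nat_add_le_of_doubling (hs : Summable s) (hanti : AntitoneOn s (Ici M)) {q : ℝ}
    (hq : q < 1 / 2) (hdouble : ∀ n ≥ M, s (2 * n) ≤ q * s n) (hN : M ≤ N) :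
    ∑' i, s (i + N) ≤ (1 - 2 * q)⁻¹ * (N * s N) := by
  have hsplit := ((summable_nat_add_iff N).2 hs).sum_add_tsum_nat_add N
  simp only [add_assoc, ← two_mul] at hsplit
  have hhead : ∑ i ∈ Finset.range N, s (i + N) ≤ N * s N := by
    simpa using Finset.sum_le_card_nsmul (Finset.range N) _ (s N)
      fun i _ => hanti (show N ∈ Ici M from hN) (mem_Ici.2 (by omega)) (by omega)
  have htail := tsum_nat_add_two_mul_le hs hanti hdouble hN
  rw [le_inv_mul_iff₀ (by linarith)]
  linarith

lemma natCast_mul_le_tsum_nat_add_succ (hs : Summable s) (hnonneg : ∀ n ≥ M, 0 ≤ s n)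
    (hanti : AntitoneOn s (Ici M)) (hN : M ≤ N) :
    N * s (2 * N) ≤ ∑' i, s (i + (N + 1)) := by
  calc (N : ℝ) * s (2 * N) = ∑ _i ∈ Finset.range N, s (2 * N) := by simp
    _ ≤ ∑ i ∈ Finset.range N, s (i + (N + 1)) := Finset.sum_le_sum fun i hi => by
        have := Finset.mem_range.1 hi
        exact hanti (mem_Ici.2 (by omega)) (mem_Ici.2 (by omega)) (by omega)
    _ ≤ ∑' i, s (i + (N + 1)) :=
        Summable.sum_le_tsum _ (fun i _ => hnonneg _ (by omega))
          ((summable_nat_add_iff (N + 1)).2 hs)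

end DoublingTail

lemma eventually_tsum_nat_add_le {f g : ℕ → ℝ} (hf : Summable f) (hg : Summable g)
    (hfg : ∀ᶠ n in atTop, f n ≤ g n) : ∀ᶠ N in atTop, ∑' i, f (i + N) ≤ ∑' i, g (i + N) := by
  obtain ⟨M, hM⟩ := eventually_atTop.1 hfg
  filter_upwards [eventually_ge_atTop M] with N hN
  exact Summable.tsum_le_tsum (fun i => hM _ (by omega)) ((summable_nat_add_iff N).2 hf)
    ((summable_nat_add_iff N).2 hg)

lemma summable_of_eventually_mul_le {f g : ℕ → ℝ} (hg : Summable g) {c : ℝ} (hc : 0 < c)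
    (hf0 : ∀ᶠ n in atTop, 0 ≤ f n) (hfg : ∀ᶠ n in atTop, c * f n ≤ g n) : Summable f := by
  refine Summable.of_norm_bounded_eventually (hg.mul_left c⁻¹) ?_
  rw [Nat.cofinite_eq_atTop]
  filter_upwards [hf0, hfg] with n hn hle
  rw [Real.norm_of_nonneg hn, inv_mul_eq_div, le_div_iff₀' hc]
  exact hle

lemma le_two_mul_natFloor {R : Type*} [Field R] [LinearOrder R] [IsStrictOrderedRing R]
    [FloorSemiring R] {a : R} (ha : 1 ≤ a) : a ≤ 2 * ⌊a⌋₊ := by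
  have h1 : (1 : R) ≤ ⌊a⌋₊ := by exact_mod_cast (Nat.one_le_floor_iff a).2 ha
  linarith [Nat.lt_floor_add_one a]

lemma Int.fract_le_self {R : Type*} [Ring R] [LinearOrder R] [IsStrictOrderedRing R]
    [FloorRing R] {a : R} (ha : 0 ≤ a) : Int.fract a ≤ a := by
  rw [Int.fract, sub_le_self_iff]
  exact_mod_cast Int.floor_nonneg.2 ha

def packingDefect (l : ℕ → ℝ) (x : ℝ) : ℝ := ∑' j, Int.fract (l j * x)

section PackingDefect

variable {l : ℕ → ℝ} {x : ℝ}

lemma summable_fract_mul (hl0 : ∀ j, 0 ≤ l j) (hl : Summable l) (hx : 0 ≤ x) :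
    Summable fun j => Int.fract (l j * x) :=
  (hl.mul_right x).of_nonneg_of_le (fun _ => Int.fract_nonneg _)
    fun j => Int.fract_le_self (mul_nonneg (hl0 j) hx)

lemma packingDefect_le (hl0 : ∀ j, 0 ≤ l j) (hl : Summable l) (hx : 0 ≤ x) (N : ℕ) :
    packingDefect l x ≤ N + x * ∑' i, l (i + N) := by
  rw [packingDefect, ← (summable_fract_mul hl0 hl hx).sum_add_tsum_nat_add N]
  have hhead : ∑ i ∈ Finset.range N, Int.fract (l i * x) ≤ N := by
    simpa using Finset.sum_le_card_nsmul (Finset.range N) _ (1 : ℝ)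
      fun i _ => (Int.fract_lt_one _).le
  have htail : ∑' i, Int.fract (l (i + N) * x) ≤ x * ∑' i, l (i + N) := by
    rw [← tsum_mul_left]
    refine Summable.tsum_le_tsum (fun i => ?_)
      ((summable_nat_add_iff N).2 (summable_fract_mul hl0 hl hx))
      (((summable_nat_add_iff N).2 hl).mul_left x)
    rw [mul_comm x]
    exact Int.fract_le_self (mul_nonneg (hl0 _) hx)
  linarith

lemma mul_tsum_nat_add_le_packingDefect (hl0 : ∀ j, 0 ≤ l j) (hl : Summable l) (hx : 0 ≤ x)
    (N : ℕ) (hsmall : ∀ i, l (i + N) * x < 1) : x * ∑' i, l (i + N) ≤ packingDefect l x := by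
  have hfract : ∀ i, Int.fract (l (i + N) * x) = x * l (i + N) := fun i => by
    rw [Int.fract_eq_self.2 ⟨mul_nonneg (hl0 _) hx, hsmall i⟩, mul_comm]
  rw [← tsum_mul_left, ← tsum_congr hfract]
  exact tsum_comp_le_tsum_of_inj (summable_fract_mul hl0 hl hx) (fun _ => Int.fract_nonneg _)
    (add_left_injective N)

end PackingDefect

section InverseOfDivApply

variable {h g : ℝ → ℝ} {y₀ D : ℝ}

lemma tendsto_div_apply_nhdsGT_zero (hpos : ∀ y > 0, 0 < h y)
    (hH : StrictMonoOn (fun y => y / h y) (Ioc 0 y₀))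
    (hg : ∀ᶠ x in atTop, g x ∈ Ioc 0 y₀ ∧ g x / h (g x) = 1 / x) :
    Tendsto (fun y => y / h y) (𝓝[>] 0) (𝓝[>] 0) := by
  have hHpos : ∀ᶠ y in 𝓝[>] (0 : ℝ), 0 < y / h y :=
    eventually_nhdsWithin_of_forall fun y (hy : 0 < y) => div_pos hy (hpos y hy)
  refine tendsto_nhdsWithin_iff.2 ⟨tendsto_order.2 ⟨fun b hb => hHpos.mono fun y hy => hb.trans hy,
    fun ε hε => ?_⟩, hHpos⟩
  obtain ⟨x, ⟨hgx, hHgx⟩, hxε⟩ := (hg.and (eventually_gt_atTop ε⁻¹)).exists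
  filter_upwards [Ioo_mem_nhdsGT hgx.1] with y hy
  calc y / h y < g x / h (g x) := hH ⟨hy.1, hy.2.le.trans hgx.2⟩ hgx hy.2
    _ = 1 / x := hHgx
    _ < ε := by rw [one_div]; exact inv_lt_of_inv_lt₀ hε hxε

lemma mul_apply_one_div_eq_inv (x : ℝ) : x * h (1 / x) = (1 / x / h (1 / x))⁻¹ := by
  rw [inv_div, div_div_eq_mul_div, div_one, mul_comm]

lemma tendsto_mul_apply_one_div_atTop (hpos : ∀ y > 0, 0 < h y)
    (hH : StrictMonoOn (fun y => y / h y) (Ioc 0 y₀))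
    (hg : ∀ᶠ x in atTop, g x ∈ Ioc 0 y₀ ∧ g x / h (g x) = 1 / x) :
    Tendsto (fun x => x * h (1 / x)) atTop atTop := by
  simp only [mul_apply_one_div_eq_inv]
  exact tendsto_inv_nhdsGT_zero.comp <| (tendsto_div_apply_nhdsGT_zero hpos hH hg).comp <|
    show Tendsto (fun x : ℝ => 1 / x) atTop (𝓝[>] 0) by
    simpa only [one_div] using tendsto_inv_atTop_nhdsGT_zero

lemma monotoneOn_mul_apply_one_div (hpos : ∀ y > 0, 0 < h y) (hy₀ : 0 < y₀)
    (hH : StrictMonoOn (fun y => y / h y) (Ioc 0 y₀)) :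
    MonotoneOn (fun x => x * h (1 / x)) (Ici y₀⁻¹) := by
  intro x (hx : y₀⁻¹ ≤ x) x' (hx' : y₀⁻¹ ≤ x') hxx'
  have hx0 : 0 < x := (inv_pos.2 hy₀).trans_le hx
  have hmem : ∀ z, y₀⁻¹ ≤ z → 1 / z ∈ Ioc 0 y₀ := fun z hz =>
    ⟨by have := (inv_pos.2 hy₀).trans_le hz; positivity,
      by rw [one_div]; exact inv_le_of_inv_le₀ hy₀ hz⟩
  have hle : 1 / x' / h (1 / x') ≤ 1 / x / h (1 / x) :=
    hH.monotoneOn (hmem x' hx') (hmem x hx) (one_div_le_one_div_of_le hx0 hxx')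
  simp only [mul_apply_one_div_eq_inv]
  exact inv_anti₀ (div_pos (hmem x' hx').1 (hpos _ (hmem x' hx').1)) hle

lemma tendsto_nhdsGT_zero_of_div_apply (hpos : ∀ y > 0, 0 < h y) (hy₀ : 0 < y₀)
    (hH : StrictMonoOn (fun y => y / h y) (Ioc 0 y₀))
    (hg : ∀ᶠ x in atTop, g x ∈ Ioc 0 y₀ ∧ g x / h (g x) = 1 / x) :
    Tendsto g atTop (𝓝[>] 0) := by
  refine tendsto_nhdsWithin_iff.2 ⟨tendsto_order.2 ⟨fun b hb => hg.mono fun x hx => hb.trans hx.1.1,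
    fun ε hε => ?_⟩, hg.mono fun x hx => hx.1.1⟩
  have hε' : min ε y₀ ∈ Ioc 0 y₀ := ⟨lt_min hε hy₀, min_le_right _ _⟩
  have hinv : Tendsto (fun x : ℝ => 1 / x) atTop (𝓝 0) := by
    simpa only [one_div] using tendsto_inv_atTop_zero
  filter_upwards [hg, hinv.eventually_lt_const (div_pos hε'.1 (hpos _ hε'.1))] with x hx hxε
  rw [← hx.2] at hxε
  exact ((hH.lt_iff_lt hx.1 hε').1 hxε).trans_le (min_le_left _ _)

lemma apply_le_one_div_iff (hpos : ∀ y > 0, 0 < h y)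
    (hH : StrictMonoOn (fun y => y / h y) (Ioc 0 y₀)) {x n : ℝ} (hx : 1 / x ∈ Ioc 0 y₀)
    (hgn : g n ∈ Ioc 0 y₀) (hHgn : g n / h (g n) = 1 / n) (hn : 0 < n) :
    g n ≤ 1 / x ↔ x * h (1 / x) ≤ n := by
  rw [← hH.le_iff_le hgn hx, hHgn, mul_apply_one_div_eq_inv, ← one_div,
    one_div_le hn (div_pos hx.1 (hpos _ hx.1))]

lemma apply_lt_one_div_iff (hpos : ∀ y > 0, 0 < h y)
    (hH : StrictMonoOn (fun y => y / h y) (Ioc 0 y₀)) {x n : ℝ} (hx : 1 / x ∈ Ioc 0 y₀)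
    (hgn : g n ∈ Ioc 0 y₀) (hHgn : g n / h (g n) = 1 / n) (hn : 0 < n) :
    g n < 1 / x ↔ x * h (1 / x) < n := by
  rw [← hH.lt_iff_lt hgn hx, hHgn, mul_apply_one_div_eq_inv, ← one_div,
    one_div_lt hn (div_pos hx.1 (hpos _ hx.1))]

lemma eventually_one_div_mem_Ioc (hy₀ : 0 < y₀) : ∀ᶠ x : ℝ in atTop, 1 / x ∈ Ioc 0 y₀ :=
  (show Tendsto (fun x : ℝ => 1 / x) atTop (𝓝[>] 0) by
    simpa only [one_div] using tendsto_inv_atTop_nhdsGT_zero).eventually_mem (Ioc_mem_nhdsGT hy₀)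

lemma eventually_apply_ceil_le_one_div (hpos : ∀ y > 0, 0 < h y) (hy₀ : 0 < y₀)
    (hH : StrictMonoOn (fun y => y / h y) (Ioc 0 y₀))
    (hg : ∀ᶠ x in atTop, g x ∈ Ioc 0 y₀ ∧ g x / h (g x) = 1 / x) :
    ∀ᶠ x in atTop, g ⌈x * h (1 / x)⌉₊ ≤ 1 / x := by
  filter_upwards [(tendsto_nat_ceil_atTop.comp (tendsto_mul_apply_one_div_atTop hpos hH hg))
      |>.eventually (tendsto_natCast_atTop_atTop.eventually (hg.and (eventually_gt_atTop 0))),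
    eventually_one_div_mem_Ioc hy₀] with x ⟨⟨hgn, hHgn⟩, hn⟩ hx
  exact (apply_le_one_div_iff hpos hH hx hgn hHgn hn).2 (Nat.le_ceil _)

lemma eventually_one_div_le_apply_floor (hpos : ∀ y > 0, 0 < h y) (hy₀ : 0 < y₀)
    (hH : StrictMonoOn (fun y => y / h y) (Ioc 0 y₀))
    (hg : ∀ᶠ x in atTop, g x ∈ Ioc 0 y₀ ∧ g x / h (g x) = 1 / x) :
    ∀ᶠ x in atTop, 1 / x ≤ g ⌊x * h (1 / x)⌋₊ := by
  filter_upwards [(tendsto_nat_floor_atTop.comp (tendsto_mul_apply_one_div_atTop hpos hH hg))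
      |>.eventually (tendsto_natCast_atTop_atTop.eventually (hg.and (eventually_gt_atTop 0))),
    eventually_one_div_mem_Ioc hy₀] with x ⟨⟨hgn, hHgn⟩, hn⟩ hx
  by_contra! hlt
  exact (Nat.floor_le (mul_pos (one_div_pos.1 hx.1) (hpos _ hx.1)).le).not_gt
    ((apply_lt_one_div_iff hpos hH hx hgn hHgn hn).1 hlt)

lemma eventually_forall_floor_lt_apply_lt_one_div (hpos : ∀ y > 0, 0 < h y) (hy₀ : 0 < y₀)
    (hH : StrictMonoOn (fun y => y / h y) (Ioc 0 y₀))
    (hg : ∀ᶠ x in atTop, g x ∈ Ioc 0 y₀ ∧ g x / h (g x) = 1 / x) :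
    ∀ᶠ x in atTop, ∀ n : ℕ, ⌊x * h (1 / x)⌋₊ < n → g n < 1 / x := by
  filter_upwards [(tendsto_nat_floor_atTop.comp (tendsto_mul_apply_one_div_atTop hpos hH hg))
      |>.eventually_forall_ge_atTop
      (tendsto_natCast_atTop_atTop.eventually (hg.and (eventually_gt_atTop 0))),
    eventually_one_div_mem_Ioc hy₀] with x hgn hx n hn
  obtain ⟨⟨hgn, hHgn⟩, hn0⟩ := hgn n hn.le
  exact (apply_lt_one_div_iff hpos hH hx hgn hHgn hn0).2
    ((Nat.floor_lt (mul_pos (one_div_pos.1 hx.1) (hpos _ hx.1)).le).1 hn)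

lemma exists_antitoneOn_natCast (hH : StrictMonoOn (fun y => y / h y) (Ioc 0 y₀))
    (hg : ∀ᶠ x in atTop, g x ∈ Ioc 0 y₀ ∧ g x / h (g x) = 1 / x) :
    ∃ M : ℕ, AntitoneOn (fun n : ℕ => g n) (Ici M) := by
  obtain ⟨M, hM⟩ := eventually_atTop.1
    ((tendsto_natCast_atTop_atTop.eventually hg).and (eventually_gt_atTop 0))
  refine ⟨M, fun m hm n hn hmn => ?_⟩
  obtain ⟨⟨hgm, hHgm⟩, hm0⟩ := hM m hm
  obtain ⟨⟨hgn, hHgn⟩, -⟩ := hM n hn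
  refine (hH.le_iff_le hgn hgm).1 ?_
  rw [hHgm, hHgn]
  gcongr

lemma eventually_apply_two_mul_le (hpos : ∀ y > 0, 0 < h y) (hy₀ : 0 < y₀)
    (hHRV : RegVaryAtZero (fun y => y / h y) D) (hH : StrictMonoOn (fun y => y / h y) (Ioc 0 y₀))
    (hg : ∀ᶠ x in atTop, g x ∈ Ioc 0 y₀ ∧ g x / h (g x) = 1 / x) {t : ℝ} (ht0 : 0 < t)
    (ht1 : t ≤ 1) (ht : 1 / 2 < t ^ D) : ∀ᶠ x in atTop, g (2 * x) ≤ t * g x := by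
  filter_upwards [hg, (tendsto_id.const_mul_atTop two_pos).eventually hg,
    (tendsto_nhdsGT_zero_of_div_apply hpos hy₀ hH hg).eventually
      (hHRV.eventually_mul_lt (fun y hy => div_pos hy (hpos y hy)) ht0 ht)]
    with x ⟨hgx, hHgx⟩ ⟨hg2x, hHg2x⟩ hlt
  have htg : t * g x ∈ Ioc 0 y₀ :=
    ⟨mul_pos ht0 hgx.1, (mul_le_of_le_one_left hgx.1.le ht1).trans hgx.2⟩
  refine ((hH.lt_iff_lt hg2x htg).1 ?_).le
  calc g (2 * x) / h (g (2 * x)) = 1 / 2 * (g x / h (g x)) := by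
        simp only [id] at hHg2x; rw [hHg2x, hHgx]; ring
    _ < _ := hlt

lemma eventually_mul_apply_le_apply_two_mul (hpos : ∀ y > 0, 0 < h y) (hy₀ : 0 < y₀)
    (hHRV : RegVaryAtZero (fun y => y / h y) D) (hH : StrictMonoOn (fun y => y / h y) (Ioc 0 y₀))
    (hg : ∀ᶠ x in atTop, g x ∈ Ioc 0 y₀ ∧ g x / h (g x) = 1 / x) {t : ℝ} (ht0 : 0 < t)
    (ht1 : t ≤ 1) (ht : t ^ D < 1 / 2) : ∀ᶠ x in atTop, t * g x ≤ g (2 * x) := by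
  filter_upwards [hg, (tendsto_id.const_mul_atTop two_pos).eventually hg,
    (tendsto_nhdsGT_zero_of_div_apply hpos hy₀ hH hg).eventually
      (hHRV.eventually_lt_mul (fun y hy => div_pos hy (hpos y hy)) ht0 ht)]
    with x ⟨hgx, hHgx⟩ ⟨hg2x, hHg2x⟩ hlt
  have htg : t * g x ∈ Ioc 0 y₀ :=
    ⟨mul_pos ht0 hgx.1, (mul_le_of_le_one_left hgx.1.le ht1).trans hgx.2⟩
  refine ((hH.lt_iff_lt htg hg2x).1 ?_).le
  calc _ < 1 / 2 * (g x / h (g x)) := hlt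
    _ = g (2 * x) / h (g (2 * x)) := by
        simp only [id] at hHg2x; rw [hHg2x, hHgx]; ring

lemma exists_tsum_nat_add_le_mul (hpos : ∀ y > 0, 0 < h y) (hy₀ : 0 < y₀) (hD : D < 1)
    (hHRV : RegVaryAtZero (fun y => y / h y) D) (hH : StrictMonoOn (fun y => y / h y) (Ioc 0 y₀))
    (hg : ∀ᶠ x in atTop, g x ∈ Ioc 0 y₀ ∧ g x / h (g x) = 1 / x)
    (hgsum : Summable fun n : ℕ => g n) :
    ∃ K > 0, ∀ᶠ N : ℕ in atTop, ∑' i, g ↑(i + N) ≤ K * (N * g N) := by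
  obtain ⟨q, hq0, hq, hqD⟩ := exists_lt_half_half_lt_rpow hD
  obtain ⟨M₁, hanti⟩ := exists_antitoneOn_natCast hH hg
  obtain ⟨M₂, hM₂⟩ := eventually_atTop.1 (tendsto_natCast_atTop_atTop.eventually
    (eventually_apply_two_mul_le hpos hy₀ hHRV hH hg hq0 (by linarith) hqD))
  refine ⟨(1 - 2 * q)⁻¹, inv_pos.2 (by linarith), eventually_atTop.2 ⟨max M₁ M₂, fun N hN => ?_⟩⟩
  exact tsum_nat_add_le_of_doubling hgsum (hanti.mono (Ici_subset_Ici.2 (le_max_left _ _))) hq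
    (fun n hn => by simpa using hM₂ n (le_of_max_le_right hn)) hN

lemma exists_mul_le_tsum_nat_add_succ (hpos : ∀ y > 0, 0 < h y) (hy₀ : 0 < y₀) (hD : 0 < D)
    (hHRV : RegVaryAtZero (fun y => y / h y) D) (hH : StrictMonoOn (fun y => y / h y) (Ioc 0 y₀))
    (hg : ∀ᶠ x in atTop, g x ∈ Ioc 0 y₀ ∧ g x / h (g x) = 1 / x)
    (hgsum : Summable fun n : ℕ => g n) :
    ∃ k > 0, ∀ᶠ N : ℕ in atTop, k * (N * g N) ≤ ∑' i, g ↑(i + (N + 1)) := by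
  obtain ⟨a, ha0, ha1, haD⟩ := exists_rpow_lt_half hD
  obtain ⟨M₁, hanti⟩ := exists_antitoneOn_natCast hH hg
  obtain ⟨M₂, hM₂⟩ := eventually_atTop.1 (tendsto_natCast_atTop_atTop.eventually
    (hg.and (eventually_mul_apply_le_apply_two_mul hpos hy₀ hHRV hH hg ha0 ha1 haD)))
  refine ⟨a, ha0, eventually_atTop.2 ⟨max M₁ M₂, fun N hN => ?_⟩⟩
  calc a * (N * g N) = N * (a * g N) := by ring
    _ ≤ N * g ↑(2 * N) := by gcongr; simpa using (hM₂ N (le_of_max_le_right hN)).2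
    _ ≤ _ := natCast_mul_le_tsum_nat_add_succ hgsum
        (fun n hn => (hM₂ n (le_of_max_le_right hn)).1.1.1.le)
        (hanti.mono (Ici_subset_Ici.2 (le_max_left _ _))) hN

lemma exists_packingDefect_le (hpos : ∀ y > 0, 0 < h y) (hy₀ : 0 < y₀) (hD : D < 1)
    (hHRV : RegVaryAtZero (fun y => y / h y) D) (hH : StrictMonoOn (fun y => y / h y) (Ioc 0 y₀))
    (hg : ∀ᶠ x in atTop, g x ∈ Ioc 0 y₀ ∧ g x / h (g x) = 1 / x) {l : ℕ → ℝ}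
    (hl0 : ∀ j, 0 ≤ l j) (hl : Summable l) (hgsum : Summable fun n : ℕ => g n) {C : ℝ}
    (hC : 0 ≤ C) (hlC : ∀ᶠ n : ℕ in atTop, l n ≤ C * g n) :
    ∃ C' > 0, ∀ᶠ x in atTop, packingDefect l x ≤ C' * (x * h (1 / x)) := by
  obtain ⟨K, hK, htail⟩ := exists_tsum_nat_add_le_mul hpos hy₀ hD hHRV hH hg hgsum
  have hF := tendsto_mul_apply_one_div_atTop hpos hH hg
  have hN : Tendsto (fun x => ⌈x * h (1 / x)⌉₊) atTop atTop := tendsto_nat_ceil_atTop.comp hF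
  refine ⟨2 * (1 + C * K), by positivity, ?_⟩
  filter_upwards [hN.eventually htail,
    hN.eventually (eventually_tsum_nat_add_le hl (hgsum.mul_left C) hlC),
    eventually_apply_ceil_le_one_div hpos hy₀ hH hg, hF.eventually_ge_atTop 1,
    eventually_gt_atTop 0] with x htailx hlx hgN hF1 hx0
  set N := ⌈x * h (1 / x)⌉₊
  have hxg : x * g N ≤ 1 := by rwa [le_div_iff₀ hx0, mul_comm] at hgN
  rw [tsum_mul_left] at hlx
  calc packingDefect l x ≤ N + x * ∑' i, l (i + N) := packingDefect_le hl0 hl hx0.le N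
    _ ≤ N + x * (C * (K * (N * g N))) := by gcongr; exact hlx.trans (by gcongr)
    _ = N * (1 + C * K * (x * g N)) := by ring
    _ ≤ N * (1 + C * K) := by
        have : C * K * (x * g N) ≤ C * K := mul_le_of_le_one_right (by positivity) hxg
        gcongr
    _ ≤ 2 * (x * h (1 / x)) * (1 + C * K) := by
        gcongr; exact Nat.ceil_le_two_mul (by linarith)
    _ = 2 * (1 + C * K) * (x * h (1 / x)) := by ring

lemma exists_le_packingDefect (hpos : ∀ y > 0, 0 < h y) (hy₀ : 0 < y₀) (hD : 0 < D)
    (hHRV : RegVaryAtZero (fun y => y / h y) D) (hH : StrictMonoOn (fun y => y / h y) (Ioc 0 y₀))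
    (hg : ∀ᶠ x in atTop, g x ∈ Ioc 0 y₀ ∧ g x / h (g x) = 1 / x) {l : ℕ → ℝ}
    (hl0 : ∀ j, 0 ≤ l j) (hl : Summable l) (hgsum : Summable fun n : ℕ => g n) {c C : ℝ}
    (hc : 0 < c) (hlc : ∀ᶠ n : ℕ in atTop, c * g n ≤ l n)
    (hlC : ∀ᶠ n : ℕ in atTop, l n ≤ C * g n) :
    ∃ c' > 0, ∀ᶠ x in atTop, c' * (x * h (1 / x)) ≤ packingDefect l x := by
  obtain ⟨k, hk, htail⟩ := exists_mul_le_tsum_nat_add_succ hpos hy₀ hD hHRV hH hg hgsum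
  set C₁ := max C 1
  have hC₁ : 1 ≤ C₁ := le_max_right _ _
  have hgN := tendsto_natCast_atTop_atTop.eventually (hg.and (eventually_gt_atTop 0))
  have hlC₁ : ∀ᶠ n : ℕ in atTop, l n ≤ C₁ * g n := by
    filter_upwards [hlC, hgN] with n hn hgn
    exact hn.trans (mul_le_mul_of_nonneg_right (le_max_left _ _) hgn.1.1.1.le)
  have hF := tendsto_mul_apply_one_div_atTop hpos hH hg
  have hCx : Tendsto (fun x => C₁ * x) atTop atTop := tendsto_id.const_mul_atTop (by positivity)
  have hK : Tendsto (fun x => ⌊C₁ * x * h (1 / (C₁ * x))⌋₊) atTop atTop :=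
    tendsto_nat_floor_atTop.comp (hF.comp hCx)
  have hK1 : Tendsto (fun x => ⌊C₁ * x * h (1 / (C₁ * x))⌋₊ + 1) atTop atTop :=
    (tendsto_add_atTop_nat 1).comp hK
  refine ⟨c * k / (2 * C₁), by positivity, ?_⟩
  filter_upwards [hK.eventually htail,
    hK1.eventually (eventually_tsum_nat_add_le (hgsum.mul_left c) hl hlc),
    hK.eventually_forall_ge_atTop hlC₁,
    hCx.eventually (eventually_forall_floor_lt_apply_lt_one_div hpos hy₀ hH hg),
    hCx.eventually (eventually_one_div_le_apply_floor hpos hy₀ hH hg),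
    hF.eventually_ge_atTop 1, eventually_ge_atTop y₀⁻¹]
    with x htailx hlx hlCK hgK_lt hgK_ge hF1 hxy₀
  set K := ⌊C₁ * x * h (1 / (C₁ * x))⌋₊
  have hx0 : 0 < x := (inv_pos.2 hy₀).trans_le hxy₀
  have hFC : x * h (1 / x) ≤ C₁ * x * h (1 / (C₁ * x)) :=
    monotoneOn_mul_apply_one_div hpos hy₀ hH hxy₀
      (hxy₀.trans (le_mul_of_one_le_left hx0.le hC₁)) (le_mul_of_one_le_left hx0.le hC₁)
  have hlt : ∀ i, l (i + (K + 1)) * x < 1 := fun i =>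
    calc l (i + (K + 1)) * x ≤ C₁ * g ↑(i + (K + 1)) * x := by gcongr; exact hlCK _ (by omega)
      _ < C₁ * (1 / (C₁ * x)) * x := by gcongr; exact hgK_lt _ (by omega)
      _ = 1 := by field_simp
  rw [tsum_mul_left] at hlx
  calc c * k / (2 * C₁) * (x * h (1 / x)) ≤ c * k / (2 * C₁) * (2 * K) :=
        mul_le_mul_of_nonneg_left (hFC.trans (le_two_mul_natFloor (hF1.trans hFC)))
          (by positivity)
    _ = c * x * (k * (K * (1 / (C₁ * x)))) := by field_simp
    _ ≤ c * x * (k * (K * g K)) := by gcongr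
    _ ≤ c * x * ∑' i, g ↑(i + (K + 1)) := by gcongr
    _ = x * (c * ∑' i, g ↑(i + (K + 1))) := by ring
    _ ≤ x * ∑' i, l (i + (K + 1)) := by gcongr
    _ ≤ packingDefect l x := mul_tsum_nat_add_le_packingDefect hl0 hl hx0.le _ hlt

end InverseOfDivApply

theorem statement16_general (D : ℝ) (hD : D ∈ Set.Ioo (0:ℝ) 1)
    (h : ℝ → ℝ) (hpos : ∀ y > 0, 0 < h y) (hsv : SmoothVaryAtZero h (1 - D))
    (y₀ : ℝ) (hy₀ : 0 < y₀) (hH : StrictMonoOn (fun y => y / h y) (Set.Ioc 0 y₀))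
    (g : ℝ → ℝ) (hg : ∀ᶠ x in atTop, g x ∈ Set.Ioc (0:ℝ) y₀ ∧ g x / h (g x) = 1 / x)
    (l : ℕ → ℝ) (hlpos : ∀ j, 0 < l j) (hlsum : Summable l)
    (hsim : ∃ c C : ℝ, 0 < c ∧ 0 < C ∧
      ∀ᶠ j : ℕ in atTop, c * g (j : ℝ) ≤ l j ∧ l j ≤ C * g (j : ℝ)) :
    ∃ c C : ℝ, 0 < c ∧ 0 < C ∧ ∀ᶠ x in atTop,
      c * (x * h (1 / x)) ≤ (∑' j : ℕ, Int.fract (l j * x)) ∧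
        (∑' j : ℕ, Int.fract (l j * x)) ≤ C * (x * h (1 / x)) := by
  obtain ⟨c, C, hc, hC, hlg⟩ := hsim
  have hHRV : RegVaryAtZero (fun y => y / h y) D := by
    simpa only [sub_sub_cancel] using hsv.1.id_div hpos
  have hl0 : ∀ j, 0 ≤ l j := fun j => (hlpos j).le
  have hgsum : Summable fun n : ℕ => g n :=
    summable_of_eventually_mul_le hlsum hc
      ((tendsto_natCast_atTop_atTop.eventually hg).mono fun n hn => hn.1.1.le)
      (hlg.mono fun n hn => hn.1)
  obtain ⟨c', hc', hlow⟩ := exists_le_packingDefect hpos hy₀ hD.1 hHRV hH hg hl0 hlsum hgsum hc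
    (hlg.mono fun n hn => hn.1) (hlg.mono fun n hn => hn.2)
  obtain ⟨C', hC', hup⟩ := exists_packingDefect_le hpos hy₀ hD.2 hHRV hH hg hl0 hlsum hgsum hC.le
    (hlg.mono fun n hn => hn.2)
  exact ⟨c', C', hc', hC', hlow.and hup⟩

/-- For a fractal string `(l_j)` with `l_j ≍ g(j)` (with `g(x) = H⁻¹(1/x)`,
`H(y) = y/h(y)`, `h ∈ SR_{1-D}`, `D ∈ (0,1)`), the packing defect
`δ(x) = ∑_j {l_j x}` satisfies `δ(x) ≍ f(x) = x·h(1/x)` as `x → ∞`. -/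
theorem statement16 (D : ℝ) (hD : D ∈ Set.Ioo (0:ℝ) 1)
    (h : ℝ → ℝ) (hpos : ∀ y > 0, 0 < h y) (hsv : SmoothVaryAtZero h (1 - D))
    (y₀ : ℝ) (hy₀ : 0 < y₀) (hH : StrictMonoOn (fun y => y / h y) (Set.Ioc 0 y₀))
    (g : ℝ → ℝ) (hg : ∀ᶠ x in atTop, g x ∈ Set.Ioc (0:ℝ) y₀ ∧ g x / h (g x) = 1 / x)
    (l : ℕ → ℝ) (hlpos : ∀ j, 0 < l j) (hlmono : Antitone l) (hlsum : Summable l)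
    (hsim : ∃ c C : ℝ, 0 < c ∧ 0 < C ∧
      ∀ᶠ j : ℕ in atTop, c * g (j : ℝ) ≤ l j ∧ l j ≤ C * g (j : ℝ)) :
    ∃ c C : ℝ, 0 < c ∧ 0 < C ∧ ∀ᶠ x in atTop,
      c * (x * h (1 / x)) ≤ (∑' j : ℕ, Int.fract (l j * x)) ∧
        (∑' j : ℕ, Int.fract (l j * x)) ≤ C * (x * h (1 / x)) :=
  statement16_general D hD h hpos hsv y₀ hy₀ hH g hg l hlpos hlsum hsim
end
end
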